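/- arXiv:2001.00134 — 5 statements merged into one kernel-verified Lean document; each statement's English description precedes it below -/
import Mathlib

section
/- Let ℓ ≥ 0 be an integer and let Q be an irreducible regular Q-matrix on E = ℤ≥0 whose embedding chain Π is recurrent. Suppose y : {1,2,3,…} → ℝ satisfies sup_{i≥1} y(i) < ∞ and y(i) ≤ Σ_{j≥1, j≠i} (q(i,j)/q_i)·y(j) + ((ℓ+1)/q_i)·𝔼_i σ_0^ℓ for every i ≥ 1 (here H = {0}). If the Q-process is (ℓ+1)-ergodic, then y(i) ≤ 𝔼_i σ_0^{ℓ+1} for every i ≥ 1. -/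
open scoped ENNReal NNReal BigOperators Classical Topology
open Filter Set

noncomputable section

/-- `q` is a Q-matrix: nonnegative off-diagonal entries, and for every state `i` the
off-diagonal row sums converge to `q_i := -q i i ∈ (0,∞)`. -/
structure IsQMatrix {E : Type*} (q : E → E → ℝ) : Prop where
  offdiag_nonneg : ∀ i j, i ≠ j → 0 ≤ q i j
  diag_neg : ∀ i, 0 < -q i i
  row_hasSum : ∀ i, HasSum (fun j => if j = i then 0 else q i j) (-q i i)

/-- Irreducibility: any two distinct states are joined by a finite chain of positive entries. -/
def MatIrreducible {E : Type*} (M : E → E → ℝ) : Prop :=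
  ∀ i j : E, i ≠ j → Relation.TransGen (fun a b => 0 < M a b) i j

/-- Regularity (non-explosiveness) of a Q-matrix. -/
def QRegular {E : Type*} (q : E → E → ℝ) : Prop :=
  ∃ lam : ℝ, 0 < lam ∧
    ∀ u : E → ℝ, (∀ i, 0 ≤ u i) → (∀ i, u i ≤ 1) →
      (∀ i, HasSum (fun j => q i j * u j) (lam * u i)) → ∀ i, u i = 0

/-- The embedding chain `Π(i,j) = q(i,j)/q_i` for `j ≠ i`, `Π(i,i) = 0`, as `ℝ≥0∞`. -/
def embed {E : Type*} (q : E → E → ℝ) (i j : E) : ℝ≥0∞ :=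
  if j = i then 0 else ENNReal.ofReal (q i j / (-q i i))

/-- `x` is the minimal nonnegative solution of the system `x i = ∑ j, A i j * x j + g i`. -/
def IsMinSol {ι : Type*} (A : ι → ι → ℝ≥0∞) (g : ι → ℝ≥0∞) (x : ι → ℝ≥0∞) : Prop :=
  (∀ i, x i = (∑' j, A i j * x j) + g i) ∧
    ∀ y : ι → ℝ≥0∞, (∀ i, y i = (∑' j, A i j * y j) + g i) → ∀ i, x i ≤ y i

/-- Recurrence of a stochastic `ℝ≥0∞`-matrix at a state `o`: the minimal nonnegative
solution of `u i = ∑_{j ≠ o} P i j * u j + P i o` (for `i ≠ o`) is identically 1. -/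
def RecurrentAt {E : Type*} (P : E → E → ℝ≥0∞) (o : E) : Prop :=
  ∀ u : {i : E // i ≠ o} → ℝ≥0∞,
    IsMinSol (fun i j : {i : E // i ≠ o} => P i.1 j.1) (fun i => P i.1 o) u → ∀ i, u i = 1

/-- Recurrence of a stochastic `ℝ≥0∞`-matrix (at some state). -/
def MatRecurrent {E : Type*} (P : E → E → ℝ≥0∞) : Prop := ∃ o : E, RecurrentAt P o

/-- `m l i = 𝔼_i σ_H ^ l`: the family of moments of the return time to `H`,
defined inductively via minimal nonnegative solutions. -/
def IsMomentSeq {E : Type*} (q : E → E → ℝ) (H : Set E) (m : ℕ → E → ℝ≥0∞) : Prop :=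
  (∀ i, m 0 i = 1) ∧
    ∀ l : ℕ,
      IsMinSol (fun i j => if j ∈ H then 0 else embed q i j)
        (fun i => (((l : ℝ≥0∞) + 1) / ENNReal.ofReal (-q i i)) * m l i) (m (l + 1))

/-- A stochastic matrix. -/
def IsStochastic {E : Type*} (P : E → E → ℝ) : Prop :=
  (∀ i j, 0 ≤ P i j) ∧ ∀ i, HasSum (P i) 1

/-- `n`-step transition "probabilities" of `P`, valued in `ℝ≥0∞`. -/
def nstepE {E : Type*} (P : E → E → ℝ) : ℕ → E → E → ℝ≥0∞
  | 0 => fun i j => if i = j then 1 else 0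
  | n + 1 => fun i j => ∑' k, nstepE P n i k * ENNReal.ofReal (P k j)

/-- Aperiodicity: every state has period 1 (the gcd of its positive return times is 1). -/
def MatAperiodic {E : Type*} (P : E → E → ℝ) : Prop :=
  ∀ i : E, ∀ d : ℕ, (∀ n : ℕ, 0 < n → 0 < nstepE P n i i → d ∣ n) → d = 1

/-- `sigmaDist P H n i = ℙ_i (σ_H = n + 1)`, where `σ_H = inf {n ≥ 1 : X n ∈ H}` is the
return time to `H` of the chain with transition matrix `P` started at `i`. -/
def sigmaDist {E : Type*} (P : E → E → ℝ) (H : Set E) : ℕ → E → ℝ≥0∞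
  | 0 => fun i => ∑' j, if j ∈ H then ENNReal.ofReal (P i j) else 0
  | n + 1 => fun i => ∑' j, if j ∈ H then 0 else ENNReal.ofReal (P i j) * sigmaDist P H n j

/-- Recurrence of the discrete-time chain: `ℙ_i (σ_H < ∞) = 1` for every `i`. -/
def DRecurrent {E : Type*} (P : E → E → ℝ) (H : Set E) : Prop :=
  ∀ i, (∑' n, sigmaDist P H n i) = 1

/-- `dMoment P H l i = 𝔼_i σ_H ^ l` (for a recurrent chain). -/
def dMoment {E : Type*} (P : E → E → ℝ) (H : Set E) (l : ℕ) (i : E) : ℝ≥0∞ :=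
  ∑' n : ℕ, ((n + 1 : ℕ) : ℝ≥0∞) ^ l * sigmaDist P H n i

/-- A single birth Q-matrix on ℕ. -/
def IsSingleBirth (q : ℕ → ℕ → ℝ) : Prop :=
  (∀ i, 0 < q i (i + 1)) ∧ ∀ i j, 2 ≤ j → q i (i + j) = 0

/-- `sbF q n i = F_n^{(i)}` of single birth theory. -/
def sbF (q : ℕ → ℕ → ℝ) : ℕ → ℕ → ℝ
  | n, i =>
    if i = n then 1
    else (1 / q n (n + 1)) *
      ∑ k ∈ (Finset.Ico i n).attach,
        (∑ j ∈ Finset.range (k.1 + 1), q n j) * sbF q k.1 i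
  termination_by n i => n
  decreasing_by exact (Finset.mem_Ico.mp k.2).2

/-- `sbd q n = d_n` of single birth theory. -/
def sbd (q : ℕ → ℕ → ℝ) : ℕ → ℝ
  | 0 => 0
  | n + 1 =>
    (1 / q (n + 1) (n + 2)) *
      (1 + ∑ k ∈ (Finset.range (n + 1)).attach,
        (∑ j ∈ Finset.range (k.1 + 1), q (n + 1) j) * sbd q k.1)
  termination_by n => n
  decreasing_by exact Finset.mem_range.mp k.2

/-- `d = sup_k (∑_{n=0}^k d_n) / (∑_{n=0}^k F_n^{(0)})`, valued in `ℝ≥0∞`. -/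
def sbdConst (q : ℕ → ℕ → ℝ) : ℝ≥0∞ :=
  ⨆ k : ℕ, ENNReal.ofReal
    ((∑ n ∈ Finset.range (k + 1), sbd q n) / (∑ n ∈ Finset.range (k + 1), sbF q n 0))

/-- Solutions of the truncated single-birth system
`x i = ∑_{1 ≤ j ≤ N, j ≠ i} (q i j / q_i) x j + 1 / q_i` for `1 ≤ i ≤ N`. -/
def sbTruncSol (q : ℕ → ℕ → ℝ) (N : ℕ) (x : ℕ → ℝ) : Prop :=
  ∀ i, 1 ≤ i → i ≤ N →
    x i = (∑ j ∈ Finset.Icc 1 N, if j = i then 0 else (q i j / (-q i i)) * x j) + 1 / (-q i i)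

/-- The Q-matrix with `q(i, i+1) = i+1` and `q(i, 0) = α_i` (for `i ≥ 1`). -/
def catQ (a : ℕ → ℝ) : ℕ → ℕ → ℝ := fun i j =>
  if j = i + 1 then (i + 1 : ℝ)
  else if j = 0 ∧ 1 ≤ i then a i
  else if j = i then -((i + 1 : ℝ) + if 1 ≤ i then a i else 0)
  else 0

/-- `α_i = (log i)^{-γ}` for `i ≥ 3`, `α_1 = α_2 = 0`. -/
def logAlpha (γ : ℝ) : ℕ → ℝ := fun i => if 3 ≤ i then Real.log i ^ (-γ) else 0

/-- The stochastic matrix with `P(i, i+1) = p_i` and `P(i, 0) = 1 - p_i`. -/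
def birthP (p : ℕ → ℝ) : ℕ → ℕ → ℝ := fun i j =>
  if j = i + 1 then p i else if j = 0 then 1 - p i else 0

lemma my_tsum_iSup_mono {ι : Type*} (f : ℕ → ι → ℝ≥0∞) (hf : Monotone f) :
    ∑' j, ⨆ n, f n j = ⨆ n, ∑' j, f n j := by
  rw [ENNReal.tsum_eq_iSup_sum]
  have h1 : ∀ s : Finset ι, ∑ a ∈ s, ⨆ n, f n a = ⨆ n, ∑ a ∈ s, f n a := fun s =>
    ENNReal.finsetSum_iSup_of_monotone (fun a i j hij => hf hij a)
  calc ⨆ s : Finset ι, ∑ a ∈ s, ⨆ n, f n a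
      = ⨆ s : Finset ι, ⨆ n, ∑ a ∈ s, f n a := by simp_rw [h1]
    _ = ⨆ n, ⨆ s : Finset ι, ∑ a ∈ s, f n a := iSup_comm
    _ = ⨆ n, ∑' j, f n j := by simp_rw [← ENNReal.tsum_eq_iSup_sum]

lemma exists_minSol {ι : Type*} (A : ι → ι → ℝ≥0∞) (g : ι → ℝ≥0∞) :
    ∃ x : ι → ℝ≥0∞, IsMinSol A g x ∧
      ∀ w : ι → ℝ≥0∞, (∀ i, (∑' j, A i j * w j) + g i ≤ w i) → ∀ i, x i ≤ w i := by
  set F : (ι → ℝ≥0∞) → ι → ℝ≥0∞ := fun u i => (∑' j, A i j * u j) + g i with hF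
  have hFmono : Monotone F := fun u v huv i =>
    add_le_add_left (ENNReal.tsum_le_tsum fun j => mul_le_mul_right (huv j) _) _
  set u : ℕ → ι → ℝ≥0∞ := fun n => F^[n] (fun _ => 0) with hu
  have hstep : ∀ n, u (n + 1) = F (u n) := fun n => Function.iterate_succ_apply' F n _
  have hmono : Monotone u := by
    apply monotone_nat_of_le_succ
    intro n
    induction n with
    | zero => intro i; exact zero_le
    | succ n ih =>
      rw [hstep, hstep]
      exact hFmono ih
  set x : ι → ℝ≥0∞ := fun i => ⨆ n, u n i with hx
  have hxsup : ∀ i, x i = ⨆ n, u (n + 1) i := by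
    intro i
    refine le_antisymm (iSup_le fun n => le_iSup_of_le n (hmono (Nat.le_succ n) i))
      (iSup_le fun n => le_iSup (fun k => u k i) (n + 1))
  have hxeq : ∀ i, x i = (∑' j, A i j * x j) + g i := by
    intro i
    have h1 : (∑' j, A i j * x j) = ⨆ n, ∑' j, A i j * u n j := by
      have : ∀ j, A i j * x j = ⨆ n, A i j * u n j := fun j => ENNReal.mul_iSup _ _
      rw [tsum_congr this, my_tsum_iSup_mono]
      intro a b hab j
      exact mul_le_mul_right (hmono hab j) _
    rw [hxsup i, h1, ENNReal.iSup_add]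
    apply iSup_congr
    intro n
    rw [hstep]
  have hle : ∀ w : ι → ℝ≥0∞, (∀ i, (∑' j, A i j * w j) + g i ≤ w i) → ∀ i, x i ≤ w i := by
    intro w hw i
    refine iSup_le fun n => ?_
    induction n generalizing i with
    | zero => exact zero_le
    | succ n ih =>
      rw [hstep]
      exact le_trans (add_le_add_left (ENNReal.tsum_le_tsum fun j => mul_le_mul_right (ih j) _) _) (hw i)
  exact ⟨x, ⟨hxeq, fun z hz => hle z (fun i => (hz i).ge)⟩, hle⟩

lemma my_tsum_sub {ι : Type*} (f g : ι → ℝ≥0∞) (hfin : ∑' i, g i ≠ ⊤) (hle : ∀ i, g i ≤ f i) :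
    ∑' i, (f i - g i) = (∑' i, f i) - ∑' i, g i := by
  have h1 : ∑' i, (f i - g i) + ∑' i, g i = ∑' i, f i := by
    rw [← ENNReal.tsum_add]
    exact tsum_congr fun i => tsub_add_cancel_of_le (hle i)
  exact (ENNReal.eq_sub_of_add_eq hfin h1)

lemma my_tsum_pointwise_eq {ι : Type*} (f g : ι → ℝ≥0∞) (hle : ∀ i, f i ≤ g i)
    (hsum : ∑' i, g i ≤ ∑' i, f i) (hfin : ∑' i, g i ≠ ⊤) : ∀ i, f i = g i := by
  have h0 : ∑' i, (g i - f i) = 0 := by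
    rw [my_tsum_sub g f (ne_top_of_le_ne_top hfin (ENNReal.tsum_le_tsum hle)) hle]
    exact tsub_eq_zero_of_le hsum
  intro i
  have := (ENNReal.tsum_eq_zero.mp h0) i
  exact le_antisymm (hle i) (tsub_eq_zero_iff_le.mp this)

lemma my_tsub_tsum {ι : Type*} (f g : ι → ℝ≥0∞) :
    (∑' i, f i) - (∑' i, g i) ≤ ∑' i, (f i - g i) := by
  rw [tsub_le_iff_right, ← ENNReal.tsum_add]
  exact ENNReal.tsum_le_tsum fun i => le_tsub_add

lemma my_tsum_split {ι : Type*} (f : ι → ℝ≥0∞) (o : ι) :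
    ∑' j, f j = f o + ∑' (j : {k : ι // k ≠ o}), f j.1 := by
  classical
  have hdecomp : ∀ j, f j = (if j = o then f o else 0) + (if j = o then 0 else f j) := by
    intro j; by_cases hj : j = o <;> simp [hj]
  rw [tsum_congr hdecomp, ENNReal.tsum_add]
  congr 1
  · have h1 : ∑' j, (if j = o then f o else 0) = (if o = o then f o else 0) :=
      tsum_eq_single o (fun b hb => if_neg hb)
    rw [h1, if_pos rfl]
  · have h2 : Function.support (fun j => if j = o then (0:ℝ≥0∞) else f j) ⊆ {k : ι | k ≠ o} := by
      intro j hj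
      simp only [Function.mem_support, ne_eq] at hj
      intro hjo
      exact hj (if_pos hjo)
    rw [← tsum_subtype_eq_of_support_subset h2]
    exact tsum_congr fun j => if_neg j.2

lemma my_coe_ennreal_sum {ι : Type*} (s : Finset ι) (G : ι → ℝ≥0∞) :
    ((∑ b ∈ s, G b : ℝ≥0∞) : EReal) = ∑ b ∈ s, (G b : EReal) := by
  induction s using Finset.cons_induction with
  | empty => simp
  | cons a s ha ih => rw [Finset.sum_cons, Finset.sum_cons, EReal.coe_ennreal_add, ih]

lemma my_ereal_tsum_le {ι : Type*} {f : ι → EReal} (hf : Summable f) {G : ι → ℝ≥0∞}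
    (h : ∀ j, f j ≤ (G j : EReal)) : ∑' j, f j ≤ ((∑' j, G j : ℝ≥0∞) : EReal) := by
  refine le_of_tendsto hf.hasSum (Filter.Eventually.of_forall fun s => ?_)
  calc ∑ b ∈ s, f b ≤ ∑ b ∈ s, (G b : EReal) := Finset.sum_le_sum fun b _ => h b
    _ = ((∑ b ∈ s, G b : ℝ≥0∞) : EReal) := (my_coe_ennreal_sum s G).symm
    _ ≤ ((∑' j, G j : ℝ≥0∞) : EReal) :=
        EReal.coe_ennreal_le_coe_ennreal_iff.mpr (ENNReal.sum_le_tsum s)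

lemma my_coe_ennreal_toReal {z : ℝ≥0∞} (hz : z ≠ ⊤) : (z : EReal) = ((z.toReal : ℝ) : EReal) := by
  conv_lhs => rw [← ENNReal.ofReal_toReal hz]
  rw [EReal.coe_ennreal_ofReal, max_eq_left ENNReal.toReal_nonneg]

/-- Comparison lemma: a bounded-above solution of the drift inequality is dominated by the
(ℓ+1)-st moment of the return time, continuous time case. -/
theorem comparison_lemma_cont (l : ℕ) (q : ℕ → ℕ → ℝ)
    (hq : IsQMatrix q) (hirr : MatIrreducible q) (hreg : QRegular q)
    (hrec : MatRecurrent (embed q))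
    (m : ℕ → ℕ → ℝ≥0∞) (hm : IsMomentSeq q {0} m)
    (y : ℕ → ℝ) (hbdd : BddAbove (y '' {i | 1 ≤ i}))
    (hineq : ∀ i : ℕ, 1 ≤ i → (y i : EReal) ≤
      (∑' j : ℕ, if j = 0 then 0 else (embed q i j : EReal) * (y j : EReal))
        + (((((l : ℝ≥0∞) + 1) / ENNReal.ofReal (-q i i)) * m l i : ℝ≥0∞) : EReal))
    (herg : ∀ i, m (l + 1) i ≠ ⊤) :
    ∀ i : ℕ, 1 ≤ i → (y i : EReal) ≤ (m (l + 1) i : EReal) := by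
  classical
  have hqi : ∀ i, 0 < -q i i := hq.diag_neg
  -- row sums of the embedding chain are 1
  have hrow : ∀ i, ∑' j, embed q i j = 1 := by
    intro i
    have hs : HasSum (fun j => (if j = i then 0 else q i j) / (-q i i)) 1 := by
      have h2 := (hq.row_hasSum i).div_const (-q i i)
      rw [div_self (ne_of_gt (hqi i))] at h2
      exact HasSum.congr_fun h2 (fun j => by congr)
    have hnn : ∀ j, 0 ≤ (if j = i then 0 else q i j) / (-q i i) := by
      intro j
      by_cases hji : j = i
      · simp [hji]
      · simp only [hji, if_false]
        exact div_nonneg (hq.offdiag_nonneg i j (Ne.symm (Ne.intro hji))) (le_of_lt (hqi i))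
    have hembed : ∀ j, embed q i j = ENNReal.ofReal ((if j = i then 0 else q i j) / (-q i i)) := by
      intro j
      by_cases hji : j = i
      · simp [embed, hji]
      · simp [embed, hji]
    calc ∑' j, embed q i j
        = ∑' j, ENNReal.ofReal ((if j = i then 0 else q i j) / (-q i i)) := tsum_congr hembed
      _ = ENNReal.ofReal (∑' j, (if j = i then 0 else q i j) / (-q i i)) :=
          (ENNReal.ofReal_tsum_of_nonneg hnn hs.summable).symm
      _ = 1 := by rw [hs.tsum_eq, ENNReal.ofReal_one]
  have hPle1 : ∀ i j, embed q i j ≤ 1 := fun i j => (ENNReal.le_tsum j).trans (hrow i).le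
  have hPtop : ∀ i j, embed q i j ≠ ⊤ := fun i j => ne_top_of_le_ne_top ENNReal.one_ne_top (hPle1 i j)
  have hPpos : ∀ i j, j ≠ i → 0 < q i j → embed q i j ≠ 0 := by
    intro i j hji hpos
    simp only [embed, hji, if_false]
    exact ne_of_gt (ENNReal.ofReal_pos.mpr (div_pos hpos (hqi i)))
  -- moment equation
  set x : ℕ → ℝ≥0∞ := m (l + 1) with hxdef
  set g : ℕ → ℝ≥0∞ := fun i => (((l : ℝ≥0∞) + 1) / ENNReal.ofReal (-q i i)) * m l i with hgdef
  set A : ℕ → ℕ → ℝ≥0∞ := fun i j => if j = 0 then 0 else embed q i j with hAdef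
  have heq : ∀ i, x i = (∑' j, A i j * x j) + g i := by
    intro i
    have h1 := (hm.2 l).1 i
    rw [hxdef] ; rw [h1]
    congr 1
    exact tsum_congr fun j => by by_cases hj : j = 0 <;> simp [hAdef, hj]
  have hxfin : ∀ i, x i ≠ ⊤ := herg
  have hgfin : ∀ i, g i ≤ x i := fun i => (heq i) ▸ le_add_self
  have hTfin : ∀ i, (∑' j, A i j * x j) ≤ x i := fun i => (heq i) ▸ le_self_add
  -- bound on y
  obtain ⟨M, hM⟩ := hbdd
  have hyM : ∀ i, 1 ≤ i → y i ≤ M := fun i hi => hM ⟨i, hi, rfl⟩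
  set C : ℝ := max M 0 with hCdef
  set p : ℕ → ℝ := fun i => if i = 0 then 0 else max (y i - (x i).toReal) 0 with hpdef
  have hp0 : p 0 = 0 := by simp [hpdef]
  have hpnn : ∀ i, 0 ≤ p i := by
    intro i
    by_cases hi : i = 0 <;> simp [hpdef, hi, le_max_right]
  have hpC : ∀ i, p i ≤ C := by
    intro i
    by_cases hi : i = 0
    · simp [hpdef, hi, hCdef, le_max_right]
    · simp only [hpdef, hi, if_false]
      apply max_le_max _ le_rfl
      have h1 : y i - (x i).toReal ≤ y i := by
        have := ENNReal.toReal_nonneg (a := x i); linarith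
      exact h1.trans (hyM i (Nat.one_le_iff_ne_zero.mpr hi))
  have hcoexi : ∀ i, ((x i : ℝ≥0∞) : EReal) = (((x i).toReal : ℝ) : EReal) :=
    fun i => my_coe_ennreal_toReal (hxfin i)
  -- Claim A
  have key : ∀ i, 1 ≤ i → ENNReal.ofReal (p i) ≤ ∑' j, A i j * ENNReal.ofReal (p j) := by
    intro i hi
    have hi0 : i ≠ 0 := Nat.one_le_iff_ne_zero.mp hi
    set P : ℝ≥0∞ := ∑' j, A i j * ENNReal.ofReal (p j) with hPdef
    have hPfin : P ≠ ⊤ := by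
      have h1 : P ≤ ENNReal.ofReal C := by
        calc P ≤ ∑' j, embed q i j * ENNReal.ofReal C := by
              apply ENNReal.tsum_le_tsum
              intro j
              apply mul_le_mul'
              · by_cases hj : j = 0 <;> simp [hAdef, hj]
              · exact ENNReal.ofReal_le_ofReal (hpC j)
          _ = (∑' j, embed q i j) * ENNReal.ofReal C := ENNReal.tsum_mul_right
          _ = ENNReal.ofReal C := by rw [hrow i, one_mul]
      exact ne_top_of_le_ne_top ENNReal.ofReal_ne_top h1
    have h4 := hineq i hi
    have hreal : y i - (x i).toReal ≤ P.toReal := by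
      by_cases hS : Summable (fun j : ℕ => if j = 0 then (0 : EReal) else (embed q i j : EReal) * (y j : EReal))
      · have hbound : ∀ j : ℕ, (if j = 0 then (0 : EReal) else (embed q i j : EReal) * (y j : EReal))
            ≤ ((A i j * x j + A i j * ENNReal.ofReal (p j) : ℝ≥0∞) : EReal) := by
          intro j
          by_cases hj : j = 0
          · simp only [hj, if_pos]
            exact EReal.coe_ennreal_nonneg _
          · simp only [hj, if_false]
            have hAj : A i j = embed q i j := by simp [hAdef, hj]
            have hxj : x j ≠ ⊤ := hxfin j
            have hetop := hPtop i j
            have hGfin : embed q i j * x j + embed q i j * ENNReal.ofReal (p j) ≠ ⊤ :=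
              (ENNReal.add_ne_top).mpr ⟨ENNReal.mul_ne_top hetop hxj,
                ENNReal.mul_ne_top hetop ENNReal.ofReal_ne_top⟩
            rw [hAj, my_coe_ennreal_toReal hGfin, my_coe_ennreal_toReal hetop, ← EReal.coe_mul,
              EReal.coe_le_coe_iff]
            have htr : (embed q i j * x j + embed q i j * ENNReal.ofReal (p j)).toReal
                = (embed q i j).toReal * (x j).toReal + (embed q i j).toReal * (p j) := by
              rw [ENNReal.toReal_add (ENNReal.mul_ne_top hetop hxj)
                (ENNReal.mul_ne_top hetop ENNReal.ofReal_ne_top), ENNReal.toReal_mul,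
                ENNReal.toReal_mul, ENNReal.toReal_ofReal (hpnn j)]
            rw [htr]
            have hyx : y j ≤ (x j).toReal + p j := by
              have : y j - (x j).toReal ≤ p j := by
                simp only [hpdef, hj, if_false]; exact le_max_left _ _
              linarith
            have he : 0 ≤ (embed q i j).toReal := ENNReal.toReal_nonneg
            nlinarith [mul_le_mul_of_nonneg_left hyx he]
        have h2 := my_ereal_tsum_le hS hbound
        have h3 : (∑' j, (A i j * x j + A i j * ENNReal.ofReal (p j)) : ℝ≥0∞)
            = (∑' j, A i j * x j) + P := ENNReal.tsum_add
        have h5 : (y i : EReal) ≤ (((∑' j, A i j * x j) + P + g i : ℝ≥0∞) : EReal) := by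
          calc (y i : EReal) ≤ _ := h4
            _ ≤ (((∑' j, A i j * x j) + P : ℝ≥0∞) : EReal) + ((g i : ℝ≥0∞) : EReal) := by
                exact add_le_add_left (le_of_le_of_eq h2 (by rw [h3])) _
            _ = _ := by rw [← EReal.coe_ennreal_add]
        have h6 : (∑' j, A i j * x j) + P + g i = x i + P := by
          rw [add_right_comm, ← heq i]
        rw [h6] at h5
        have hfinxP : x i + P ≠ ⊤ := ENNReal.add_ne_top.mpr ⟨hxfin i, hPfin⟩
        rw [my_coe_ennreal_toReal hfinxP, EReal.coe_le_coe_iff,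
          ENNReal.toReal_add (hxfin i) hPfin] at h5
        linarith
      · rw [tsum_eq_zero_of_not_summable hS, zero_add] at h4
        have h7 : (y i : EReal) ≤ ((x i : ℝ≥0∞) : EReal) :=
          h4.trans (EReal.coe_ennreal_le_coe_ennreal_iff.mpr (hgfin i))
        rw [hcoexi i, EReal.coe_le_coe_iff] at h7
        have := ENNReal.toReal_nonneg (a := P)
        linarith
    have hple : p i ≤ P.toReal := by
      simp only [hpdef, hi0, if_false]
      exact max_le hreal ENNReal.toReal_nonneg
    calc ENNReal.ofReal (p i) ≤ ENNReal.ofReal P.toReal := ENNReal.ofReal_le_ofReal hple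
      _ = P := ENNReal.ofReal_toReal hPfin
  -- finish
  by_cases hzero : ∀ k, p k = 0
  · intro i hi
    have hi0 : i ≠ 0 := Nat.one_le_iff_ne_zero.mp hi
    have h1 : y i - (x i).toReal ≤ 0 := by
      have h2 := hzero i
      simp only [hpdef, hi0, if_false] at h2
      have h3 := le_max_left (y i - (x i).toReal) 0
      rw [h2] at h3; exact h3
    rw [hcoexi i]
    exact EReal.coe_le_coe_iff.mpr (by linarith)
  · exfalso
    push_neg at hzero
    obtain ⟨i₀, hi₀⟩ := hzero
    have hbddp : BddAbove (Set.range p) := ⟨C, by rintro _ ⟨j, rfl⟩; exact hpC j⟩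
    set c : ℝ := sSup (Set.range p) with hcdef
    have hcp : ∀ j, p j ≤ c := fun j => le_csSup hbddp ⟨j, rfl⟩
    have hcpos : 0 < c := lt_of_lt_of_le (lt_of_le_of_ne (hpnn i₀) (Ne.symm hi₀)) (hcp i₀)
    have hc0 : ENNReal.ofReal c ≠ 0 := ne_of_gt (ENNReal.ofReal_pos.mpr hcpos)
    have hcfin : ENNReal.ofReal c ≠ ⊤ := ENNReal.ofReal_ne_top
    set h : ℕ → ℝ≥0∞ := fun k => ENNReal.ofReal (p k) * (ENNReal.ofReal c)⁻¹ with hhdef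
    have hh1 : ∀ k, h k ≤ 1 := by
      intro k
      calc h k ≤ ENNReal.ofReal c * (ENNReal.ofReal c)⁻¹ :=
            mul_le_mul_left (ENNReal.ofReal_le_ofReal (hcp k)) _
        _ = 1 := ENNReal.mul_inv_cancel hc0 hcfin
    have hhtop : ∀ k, h k ≠ ⊤ := fun k => ne_top_of_le_ne_top ENNReal.one_ne_top (hh1 k)
    have hh0 : h 0 = 0 := by simp [hhdef, hp0]
    have hsubh : ∀ k, h k ≤ ∑' j, embed q k j * h j := by
      intro k
      by_cases hk : k = 0
      · rw [hk, hh0]; exact zero_le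
      · have h1 := key k (Nat.one_le_iff_ne_zero.mpr hk)
        calc h k ≤ (∑' j, A k j * ENNReal.ofReal (p j)) * (ENNReal.ofReal c)⁻¹ :=
              mul_le_mul_left h1 _
          _ = ∑' j, A k j * ENNReal.ofReal (p j) * (ENNReal.ofReal c)⁻¹ :=
              ENNReal.tsum_mul_right.symm
          _ = ∑' j, embed q k j * h j := by
              apply tsum_congr
              intro j
              by_cases hj : j = 0
              · simp [hAdef, hj, hh0]
              · simp [hAdef, hj, hhdef, mul_assoc]
    obtain ⟨o, ho⟩ := hrec
    have hrowsum : ∀ k (b : ℝ≥0∞), ∑' j, embed q k j * b = b := fun k b => by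
      rw [ENNReal.tsum_mul_right, hrow k, one_mul]
    set v : ℕ → ℝ≥0∞ := fun k => h k - h o with hvdef
    have hvo : v o = 0 := tsub_self _
    have hv1 : ∀ k, v k ≤ 1 := fun k => le_trans tsub_le_self (hh1 k)
    have hvsub : ∀ k, v k ≤ ∑' j, embed q k j * v j := by
      intro k
      calc v k ≤ (∑' j, embed q k j * h j) - h o := tsub_le_tsub_right (hsubh k) _
        _ = (∑' j, embed q k j * h j) - (∑' j, embed q k j * h o) := by rw [hrowsum k (h o)]
        _ ≤ ∑' j, (embed q k j * h j - embed q k j * h o) := my_tsub_tsum _ _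
        _ = ∑' j, embed q k j * v j :=
            tsum_congr fun j => (ENNReal.mul_sub (fun _ _ => hPtop k j)).symm
    have hvzero : ∀ k, v k = 0 := by
      have hw : ∀ (i : {k : ℕ // k ≠ o}),
          (∑' (j : {k : ℕ // k ≠ o}), embed q i.1 j.1 * (1 - v j.1)) + embed q i.1 o
            ≤ 1 - v i.1 := by
        intro i
        have hrowT : (∑' (j : {k : ℕ // k ≠ o}), embed q i.1 j.1) + embed q i.1 o = 1 := by
          rw [add_comm]
          exact (my_tsum_split (fun j => embed q i.1 j) o).symm.trans (hrow i.1)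
        have hfinT : (∑' (j : {k : ℕ // k ≠ o}), embed q i.1 j.1) ≠ ⊤ :=
          ne_top_of_le_ne_top ENNReal.one_ne_top (le_of_le_of_eq le_self_add hrowT)
        have hlesum : (∑' (j : {k : ℕ // k ≠ o}), embed q i.1 j.1 * v j.1)
            ≤ ∑' (j : {k : ℕ // k ≠ o}), embed q i.1 j.1 :=
          ENNReal.tsum_le_tsum fun j => by
            calc embed q i.1 j.1 * v j.1 ≤ embed q i.1 j.1 * 1 := mul_le_mul_right (hv1 j.1) _
              _ = embed q i.1 j.1 := mul_one _
        have hfinv : (∑' (j : {k : ℕ // k ≠ o}), embed q i.1 j.1 * v j.1) ≠ ⊤ :=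
          ne_top_of_le_ne_top hfinT hlesum
        have hterm : ∀ (j : {k : ℕ // k ≠ o}), embed q i.1 j.1 * (1 - v j.1)
            = embed q i.1 j.1 - embed q i.1 j.1 * v j.1 := fun j => by
          rw [ENNReal.mul_sub (fun _ _ => hPtop _ _), mul_one]
        have hvi : v i.1 ≤ ∑' (j : {k : ℕ // k ≠ o}), embed q i.1 j.1 * v j.1 := by
          have h2 := hvsub i.1
          rw [my_tsum_split (fun j => embed q i.1 j * v j) o, hvo, mul_zero, zero_add] at h2
          exact h2
        calc (∑' (j : {k : ℕ // k ≠ o}), embed q i.1 j.1 * (1 - v j.1)) + embed q i.1 o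
            = ((∑' (j : {k : ℕ // k ≠ o}), embed q i.1 j.1)
                - (∑' (j : {k : ℕ // k ≠ o}), embed q i.1 j.1 * v j.1)) + embed q i.1 o := by
              rw [tsum_congr hterm, my_tsum_sub _ _ hfinv (fun j => by
                calc embed q i.1 j.1 * v j.1 ≤ embed q i.1 j.1 * 1 :=
                      mul_le_mul_right (hv1 j.1) _
                  _ = embed q i.1 j.1 := mul_one _)]
          _ = ((∑' (j : {k : ℕ // k ≠ o}), embed q i.1 j.1) + embed q i.1 o)
                - (∑' (j : {k : ℕ // k ≠ o}), embed q i.1 j.1 * v j.1) :=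
              (ENNReal.cancel_of_ne hfinv).tsub_add_eq_add_tsub hlesum
          _ = 1 - (∑' (j : {k : ℕ // k ≠ o}), embed q i.1 j.1 * v j.1) := by rw [hrowT]
          _ ≤ 1 - v i.1 := tsub_le_tsub_left hvi 1
      obtain ⟨u, hu, humin⟩ := exists_minSol
        (fun i j : {k : ℕ // k ≠ o} => embed q i.1 j.1) (fun i : {k : ℕ // k ≠ o} => embed q i.1 o)
      have hone : ∀ i : {k : ℕ // k ≠ o}, (1 : ℝ≥0∞) ≤ 1 - v i.1 := by
        intro i
        calc (1 : ℝ≥0∞) = u i := (ho u hu i).symm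
          _ ≤ 1 - v i.1 := humin _ hw i
      intro k
      by_cases hk : k = o
      · rw [hk]; exact hvo
      · by_contra hne
        have h2 : 1 - v k < 1 := ENNReal.sub_lt_self ENNReal.one_ne_top one_ne_zero hne
        exact absurd (lt_of_le_of_lt (hone ⟨k, hk⟩) h2) (lt_irrefl _)
    have hmax : ∀ k, h k ≤ h o := fun k => tsub_eq_zero_iff_le.mp (hvzero k)
    have hSprop : ∀ a, h a = h o → ∀ b, 0 < q a b → h b = h o := by
      intro a ha b hqab
      have hba : b ≠ a := by
        rintro rfl
        have := hqi b
        linarith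
      have hsum1 : ∑' j, embed q a j * h j = ∑' j, embed q a j * h o := by
        apply le_antisymm
        · exact ENNReal.tsum_le_tsum fun j => mul_le_mul_right (hmax j) _
        · rw [hrowsum a (h o), ← ha]
          exact hsubh a
      have hfino : (∑' j, embed q a j * h o) ≠ ⊤ := by rw [hrowsum a (h o)]; exact hhtop o
      have heqterm := my_tsum_pointwise_eq (fun j => embed q a j * h j)
        (fun j => embed q a j * h o) (fun j => mul_le_mul_right (hmax j) _)
        (le_of_eq hsum1.symm) hfino b
      exact (ENNReal.mul_right_inj (hPpos a b hba hqab) (hPtop a b)).mp heqterm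
    have hho : h o = 0 := by
      by_cases hoz : o = 0
      · rw [hoz]; exact hh0
      · have htg := hirr o 0 hoz
        have hreach : ∀ b, Relation.TransGen (fun a b => 0 < q a b) o b → h b = h o := by
          intro b htb
          induction htb with
          | single hab => exact hSprop o rfl _ hab
          | tail _ hbc ih => exact hSprop _ ih _ hbc
        rw [← hreach 0 htg]
        exact hh0
    have hi₀pos : 0 < h i₀ :=
      ENNReal.mul_pos (ne_of_gt (ENNReal.ofReal_pos.mpr
        (lt_of_le_of_ne (hpnn i₀) (Ne.symm hi₀)))) (ENNReal.inv_ne_zero.mpr hcfin)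
    have hfin : h i₀ = 0 := le_antisymm (hho ▸ hmax i₀) zero_le
    exact absurd hfin (ne_of_gt hi₀pos)
end
end

section
/- Let ℓ ≥ 0 be an integer and let P be an irreducible aperiodic stochastic matrix on E = ℤ≥0 whose chain is recurrent. Suppose y : {1,2,3,…} → ℝ satisfies sup_{i≥1} y(i) < ∞ and y(i) ≤ Σ_{j≥1} P(i,j)·y(j) + 𝔼_i σ_0^ℓ for every i ≥ 1 (here H = {0}). If the chain is (ℓ+1)-ergodic, then y(i) ≤ 𝔼_i σ_0^{ℓ+1} for every i ≥ 1. -/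
open scoped ENNReal NNReal BigOperators Classical Topology
open Filter Set

noncomputable section

/-! ### Auxiliary material for `comparison_lemma_disc` -/

private lemma sigmaDist_succ' (P : ℕ → ℕ → ℝ) (n i : ℕ) :
    sigmaDist P {0} (n+1) i
      = ∑' j : ℕ, if j = 0 then 0 else ENNReal.ofReal (P i j) * sigmaDist P {0} n j := by
  simp [sigmaDist, Set.mem_singleton_iff]

/-- Tail probability `ℙ_i(σ > n)`. -/
private def Tt (P : ℕ → ℕ → ℝ) (n i : ℕ) : ℝ≥0∞ := ∑' m, sigmaDist P {0} (n+m) i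

/-- `E_i[1_{σ>k} (σ-k)^l]`. -/
private def Bf (P : ℕ → ℕ → ℝ) (l k i : ℕ) : ℝ≥0∞ :=
  ∑' m, ((m+1:ℕ):ℝ≥0∞)^l * sigmaDist P {0} (k+m) i

private def Af (P : ℕ → ℕ → ℝ) (l n i : ℕ) : ℝ≥0∞ := ∑ k ∈ Finset.range n, Bf P l k i

private lemma rec_step (P : ℕ → ℕ → ℝ) (w : ℕ → ℝ≥0∞) (k i : ℕ) :
    (∑' m, w m * sigmaDist P {0} (k+1+m) i)
      = ∑' j : ℕ, (if j = 0 then 0 else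
          ENNReal.ofReal (P i j) * ∑' m, w m * sigmaDist P {0} (k+m) j) := by
  have h1 : ∀ m, w m * sigmaDist P {0} (k+1+m) i
      = ∑' j : ℕ, (if j = 0 then 0
          else w m * (ENNReal.ofReal (P i j) * sigmaDist P {0} (k+m) j)) := by
    intro m
    have hkm : k+1+m = (k+m)+1 := by ring
    rw [hkm, sigmaDist_succ', ← ENNReal.tsum_mul_left]
    refine tsum_congr fun j => ?_
    by_cases h : j = 0 <;> simp [h]
  calc (∑' m, w m * sigmaDist P {0} (k+1+m) i)
      = ∑' m, ∑' j : ℕ, (if j = 0 then 0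
          else w m * (ENNReal.ofReal (P i j) * sigmaDist P {0} (k+m) j)) := tsum_congr h1
    _ = ∑' j : ℕ, ∑' m, (if j = 0 then 0
          else w m * (ENNReal.ofReal (P i j) * sigmaDist P {0} (k+m) j)) := ENNReal.tsum_comm
    _ = _ := by
        refine tsum_congr fun j => ?_
        by_cases h : j = 0
        · simp [h]
        · simp only [h, if_false]
          rw [← ENNReal.tsum_mul_left]
          refine tsum_congr fun m => ?_
          ring

private lemma Tt_succ (P : ℕ → ℕ → ℝ) (n i : ℕ) :
    Tt P (n+1) i = ∑' j : ℕ, if j = 0 then 0 else ENNReal.ofReal (P i j) * Tt P n j := by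
  have h := rec_step P (fun _ => 1) n i
  simpa [Tt, one_mul] using h

private lemma Bf_succ (P : ℕ → ℕ → ℝ) (l k i : ℕ) :
    Bf P l (k+1) i = ∑' j : ℕ, if j = 0 then 0 else ENNReal.ofReal (P i j) * Bf P l k j := by
  have h := rec_step P (fun m => ((m+1:ℕ):ℝ≥0∞)^l) k i
  simpa [Bf] using h

private lemma tsum_shift (F : ℕ → ℝ≥0∞) (k : ℕ) :
    (∑' m, F (k+m)) = ∑' m, if k ≤ m then F m else 0 := by
  have hinj : Function.Injective (fun m : ℕ => k + m) := fun a b h => by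
    simpa using h
  have hsupp : Function.support (fun m' => if k ≤ m' then F m' else 0)
      ⊆ Set.range (fun m : ℕ => k + m) := by
    intro x hx
    by_cases h : k ≤ x
    · exact ⟨x - k, by show k + (x - k) = x; omega⟩
    · simp [h] at hx
  have h := Function.Injective.tsum_eq hinj (f := fun m' => if k ≤ m' then F m' else 0) hsupp
  rw [← h]
  exact tsum_congr fun m => by simp

private lemma Bf_eq (P : ℕ → ℕ → ℝ) (l k i : ℕ) :
    Bf P l k i = ∑' m, if k ≤ m then ((m-k+1:ℕ):ℝ≥0∞)^l * sigmaDist P {0} m i else 0 := by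
  rw [Bf, ← tsum_shift (fun m => ((m-k+1:ℕ):ℝ≥0∞)^l * sigmaDist P {0} m i) k]
  exact tsum_congr fun m => by simp [Nat.add_sub_cancel_left]

private lemma Bf_zero (P : ℕ → ℕ → ℝ) (l i : ℕ) : Bf P l 0 i = dMoment P {0} l i := by
  simp [Bf, dMoment]

private lemma Af_le (P : ℕ → ℕ → ℝ) (l n i : ℕ) :
    Af P l n i ≤ dMoment P {0} (l+1) i := by
  have h1 : Af P l n i = ∑' m, ∑ k ∈ Finset.range n,
      (if k ≤ m then ((m-k+1:ℕ):ℝ≥0∞)^l * sigmaDist P {0} m i else 0) := by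
    rw [Af]
    rw [Summable.tsum_finsetSum (fun _ _ => ENNReal.summable)]
    exact Finset.sum_congr rfl fun k _ => Bf_eq P l k i
  rw [h1, dMoment]
  refine Summable.tsum_le_tsum (fun m => ?_) ENNReal.summable ENNReal.summable
  have h2 : ∀ k ∈ Finset.range n,
      (if k ≤ m then ((m-k+1:ℕ):ℝ≥0∞)^l * sigmaDist P {0} m i else 0)
        ≤ (if k ≤ m then ((m+1:ℕ):ℝ≥0∞)^l * sigmaDist P {0} m i else 0) := by
    intro k _
    by_cases h : k ≤ m
    · simp only [h, if_true]
      refine mul_le_mul_left (pow_le_pow_left' ?_ l) _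
      have hmk : (m - k + 1 : ℕ) ≤ m + 1 := by omega
      exact_mod_cast hmk
    · rw [if_neg h, if_neg h]
  refine le_trans (Finset.sum_le_sum h2) ?_
  rw [← Finset.sum_filter]
  rw [Finset.sum_const]
  have hcard : ((Finset.range n).filter (fun k => k ≤ m)).card ≤ m + 1 := by
    have hsub : (Finset.range n).filter (fun k => k ≤ m) ⊆ Finset.range (m+1) := by
      intro k hk
      simp only [Finset.mem_filter, Finset.mem_range] at hk ⊢
      omega
    simpa using Finset.card_le_card hsub
  calc ((Finset.range n).filter (fun k => k ≤ m)).card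
        • (((m+1:ℕ):ℝ≥0∞)^l * sigmaDist P {0} m i)
      = ((((Finset.range n).filter (fun k => k ≤ m)).card : ℕ) : ℝ≥0∞)
          * (((m+1:ℕ):ℝ≥0∞)^l * sigmaDist P {0} m i) := nsmul_eq_mul _ _
    _ ≤ ((m+1:ℕ):ℝ≥0∞) * (((m+1:ℕ):ℝ≥0∞)^l * sigmaDist P {0} m i) :=
        mul_le_mul_left (Nat.cast_le.2 hcard) _
    _ = ((m+1:ℕ):ℝ≥0∞)^(l+1) * sigmaDist P {0} m i := by
        rw [pow_succ]
        ring

private lemma Bf_ne_top (P : ℕ → ℕ → ℝ) (l : ℕ)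
    (herg : ∀ i, dMoment P {0} (l + 1) i ≠ ⊤) (k i : ℕ) : Bf P l k i ≠ ⊤ := by
  refine ne_top_of_le_ne_top (herg i) (le_trans ?_ (Af_le P l (k+1) i))
  rw [Af]
  exact Finset.single_le_sum (f := fun k' => Bf P l k' i) (fun _ _ => zero_le)
    (Finset.self_mem_range_succ k)

private lemma Af_ne_top (P : ℕ → ℕ → ℝ) (l : ℕ)
    (herg : ∀ i, dMoment P {0} (l + 1) i ≠ ⊤) (n i : ℕ) : Af P l n i ≠ ⊤ :=
  ne_top_of_le_ne_top (herg i) (Af_le P l n i)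

private lemma Tt_le_one (P : ℕ → ℕ → ℝ) (hrec : DRecurrent P {0}) (n i : ℕ) :
    Tt P n i ≤ 1 := by
  rw [Tt, tsum_shift (fun m => sigmaDist P {0} m i) n, ← hrec i]
  refine Summable.tsum_le_tsum (fun m => ?_) ENNReal.summable ENNReal.summable
  by_cases h : n ≤ m <;> simp [h]

private lemma Tt_zero (P : ℕ → ℕ → ℝ) (hrec : DRecurrent P {0}) (i : ℕ) :
    Tt P 0 i = 1 := by
  rw [Tt]
  simpa using hrec i

private lemma Tt_tendsto (P : ℕ → ℕ → ℝ) (hrec : DRecurrent P {0}) (i : ℕ) :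
    Filter.Tendsto (fun n => Tt P n i) Filter.atTop (𝓝 0) := by
  have h0 : (∑' m, sigmaDist P {0} m i) ≠ ⊤ := by
    rw [hrec i]; exact ENNReal.one_ne_top
  have h := ENNReal.tendsto_sum_nat_add (fun m => sigmaDist P {0} m i) h0
  have heq : (fun n => Tt P n i) = fun n => ∑' m, sigmaDist P {0} (m+n) i := by
    funext n
    exact tsum_congr fun m => by rw [Nat.add_comm]
  rw [heq]
  exact h

private lemma ereal_coe_sum (s : Finset ℕ) (f : ℕ → ℝ) :
    ((∑ j ∈ s, f j : ℝ) : EReal) = ∑ j ∈ s, (f j : EReal) := by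
  induction s using Finset.cons_induction with
  | empty => simp
  | cons a s ha ih => rw [Finset.sum_cons, Finset.sum_cons, EReal.coe_add, ih]

private lemma ereal_tsum_le (f g : ℕ → ℝ) (hg0 : ∀ j, 0 ≤ g j) (hfg : ∀ j, f j ≤ g j)
    (hgs : Summable g) : (∑' j, (f j : EReal)) ≤ ((∑' j, g j : ℝ) : EReal) := by
  by_cases hs : Summable fun j => (f j : EReal)
  · obtain ⟨a, ha⟩ := hs
    rw [ha.tsum_eq]
    refine le_of_tendsto ha (Filter.Eventually.of_forall fun s => ?_)
    calc (∑ j ∈ s, (f j : EReal)) = ((∑ j ∈ s, f j : ℝ) : EReal) := (ereal_coe_sum s f).symm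
      _ ≤ ((∑ j ∈ s, g j : ℝ) : EReal) := by
          exact_mod_cast Finset.sum_le_sum (fun j _ => hfg j)
      _ ≤ _ := by exact_mod_cast Summable.sum_le_tsum s (fun j _ => hg0 j) hgs
  · rw [tsum_eq_zero_of_not_summable hs]
    exact_mod_cast tsum_nonneg hg0

private lemma coe_ennreal_eq (x : ℝ≥0∞) (hx : x ≠ ⊤) :
    (x : EReal) = ((x.toReal : ℝ) : EReal) := by
  rw [← EReal.toReal_coe_ennreal]
  exact (EReal.coe_toReal (by simpa using hx) (EReal.coe_ennreal_ne_bot x)).symm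

private def Gf (P : ℕ → ℕ → ℝ) (l : ℕ) (M : ℝ) (n j : ℕ) : ℝ≥0∞ :=
  ENNReal.ofReal M * Tt P n j + Af P l n j

/-- Comparison lemma: a bounded-above solution of the drift inequality is dominated by the
(ℓ+1)-st moment of the return time, discrete time case. -/
theorem comparison_lemma_disc (l : ℕ) (P : ℕ → ℕ → ℝ)
    (hP : IsStochastic P) (hirr : MatIrreducible P) (hap : MatAperiodic P)
    (hrec : DRecurrent P {0})
    (y : ℕ → ℝ) (hbdd : BddAbove (y '' {i | 1 ≤ i}))
    (hineq : ∀ i : ℕ, 1 ≤ i → (y i : EReal) ≤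
      (∑' j : ℕ, if j = 0 then 0 else (P i j : EReal) * (y j : EReal))
        + (dMoment P {0} l i : EReal))
    (herg : ∀ i, dMoment P {0} (l + 1) i ≠ ⊤) :
    ∀ i : ℕ, 1 ≤ i → (y i : EReal) ≤ (dMoment P {0} (l + 1) i : EReal) := by
  -- setup
  obtain ⟨M0, hM0⟩ := hbdd
  set M : ℝ := max M0 0 with hMdef
  have hM0' : (0:ℝ) ≤ M := le_max_right _ _
  have hyM : ∀ j, 1 ≤ j → y j ≤ M := fun j hj =>
    le_trans (hM0 ⟨j, hj, rfl⟩) (le_max_left _ _)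
  have hTne : ∀ n j, Tt P n j ≠ ⊤ := fun n j =>
    ne_top_of_le_ne_top ENNReal.one_ne_top (Tt_le_one P hrec n j)
  have hGne : ∀ n j, Gf P l M n j ≠ ⊤ := fun n j =>
    ENNReal.add_ne_top.2 ⟨ENNReal.mul_ne_top ENNReal.ofReal_ne_top (hTne n j),
      Af_ne_top P l herg n j⟩
  have hml_ne : ∀ j, dMoment P {0} l j ≠ ⊤ := fun j => by
    rw [← Bf_zero]; exact Bf_ne_top P l herg 0 j
  -- main induction
  have key : ∀ n, ∀ j, 1 ≤ j → (y j : EReal) ≤ (((Gf P l M n j).toReal : ℝ) : EReal) := by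
    intro n
    induction n with
    | zero =>
      intro j hj
      have hG : Gf P l M 0 j = ENNReal.ofReal M := by
        simp [Gf, Af, Tt_zero P hrec j]
      rw [hG, ENNReal.toReal_ofReal hM0']
      exact_mod_cast hyM j hj
    | succ n ih =>
      intro i hi
      -- the ENNReal-valued majorant of the inner sum
      set g : ℕ → ℝ≥0∞ := fun j =>
        if j = 0 then 0 else ENNReal.ofReal (P i j) * Gf P l M n j with hgdef
      have hg_ne : ∀ j, g j ≠ ⊤ := by
        intro j
        by_cases h : j = 0
        · simp [hgdef, h]
        · simp only [hgdef, h, if_false]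
          exact ENNReal.mul_ne_top ENNReal.ofReal_ne_top (hGne n j)
      have hgsum : (∑' j, g j)
          = ENNReal.ofReal M * Tt P (n+1) i + ∑ k ∈ Finset.range n, Bf P l (k+1) i := by
        have hsplit : ∀ j : ℕ, g j
            = (ENNReal.ofReal M * (if j = 0 then 0 else ENNReal.ofReal (P i j) * Tt P n j))
              + ∑ k ∈ Finset.range n,
                  (if j = 0 then 0 else ENNReal.ofReal (P i j) * Bf P l k j) := by
          intro j
          by_cases h : j = 0
          · simp [hgdef, h]
          · simp only [hgdef, h, if_false, Gf, Af]
            rw [mul_add, Finset.mul_sum]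
            ring_nf
        calc (∑' j, g j)
            = (∑' j, ENNReal.ofReal M *
                (if j = 0 then 0 else ENNReal.ofReal (P i j) * Tt P n j))
              + ∑' j, ∑ k ∈ Finset.range n,
                  (if j = 0 then 0 else ENNReal.ofReal (P i j) * Bf P l k j) := by
              rw [← ENNReal.tsum_add]; exact tsum_congr hsplit
          _ = ENNReal.ofReal M * Tt P (n+1) i + ∑ k ∈ Finset.range n, Bf P l (k+1) i := by
              congr 1
              · rw [ENNReal.tsum_mul_left, ← Tt_succ]
              · rw [Summable.tsum_finsetSum (fun _ _ => ENNReal.summable)]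
                exact Finset.sum_congr rfl fun k _ => (Bf_succ P l k i).symm
      have hgsum_ne : (∑' j, g j) ≠ ⊤ := by
        rw [hgsum]
        refine ENNReal.add_ne_top.2 ⟨ENNReal.mul_ne_top ENNReal.ofReal_ne_top (hTne _ _), ?_⟩
        refine ne_top_of_le_ne_top (Af_ne_top P l herg (n+1) i) ?_
        rw [Af, Finset.sum_range_succ']
        exact le_add_right le_rfl
      -- real versions
      set gR : ℕ → ℝ := fun j => if j = 0 then 0 else P i j * (Gf P l M n j).toReal with hgRdef
      have hg_toReal : ∀ j, (g j).toReal = gR j := by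
        intro j
        by_cases h : j = 0
        · simp [hgdef, hgRdef, h]
        · simp only [hgdef, hgRdef, h, if_false]
          rw [ENNReal.toReal_mul, ENNReal.toReal_ofReal (hP.1 i j)]
      have hgR_nonneg : ∀ j, 0 ≤ gR j := by
        intro j
        by_cases h : j = 0
        · simp [hgRdef, h]
        · simp only [hgRdef, h, if_false]
          exact mul_nonneg (hP.1 i j) ENNReal.toReal_nonneg
      have hgR_summable : Summable gR := by
        have := ENNReal.summable_toReal hgsum_ne
        simpa [hg_toReal] using this
      -- the inner sum of the drift inequality, rewritten with real coefficients
      set fR : ℕ → ℝ := fun j => if j = 0 then 0 else P i j * y j with hfRdef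
      have hfR_le : ∀ j, fR j ≤ gR j := by
        intro j
        by_cases h : j = 0
        · simp [hfRdef, hgRdef, h]
        · simp only [hfRdef, hgRdef, h, if_false]
          have hj1 : 1 ≤ j := Nat.one_le_iff_ne_zero.2 h
          have := EReal.coe_le_coe_iff.1 (ih j hj1)
          exact mul_le_mul_of_nonneg_left this (hP.1 i j)
      have hrw : (∑' j : ℕ, if j = 0 then 0 else (P i j : EReal) * (y j : EReal))
          = ∑' j, ((fR j : ℝ) : EReal) := by
        refine tsum_congr fun j => ?_
        by_cases h : j = 0
        · simp [hfRdef, h]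
        · simp [hfRdef, h, EReal.coe_mul]
      have hsum_le : (∑' j : ℕ, if j = 0 then 0 else (P i j : EReal) * (y j : EReal))
          ≤ ((∑' j, gR j : ℝ) : EReal) := by
        rw [hrw]
        exact ereal_tsum_le fR gR hgR_nonneg hfR_le hgR_summable
      -- assemble
      have h1 := hineq i hi
      have hml : (dMoment P {0} l i : EReal) = (((dMoment P {0} l i).toReal : ℝ) : EReal) :=
        coe_ennreal_eq _ (hml_ne i)
      have h2 : (y i : EReal)
          ≤ (((∑' j, gR j) + (dMoment P {0} l i).toReal : ℝ) : EReal) := by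
        refine le_trans h1 ?_
        rw [hml, EReal.coe_add]
        exact add_le_add hsum_le le_rfl
      refine le_trans h2 ?_
      rw [EReal.coe_le_coe_iff]
      -- real computation
      have hgR_tsum : (∑' j, gR j) = (∑' j, g j).toReal := by
        rw [ENNReal.tsum_toReal_eq hg_ne]
        exact tsum_congr fun j => (hg_toReal j).symm
      have hGsucc : (∑' j, g j) + dMoment P {0} l i = Gf P l M (n+1) i := by
        rw [hgsum, Gf, Af, Finset.sum_range_succ', Bf_zero]
        ring
      rw [hgR_tsum, ← ENNReal.toReal_add hgsum_ne (hml_ne i), hGsucc]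
  -- take limits
  intro i hi
  have hfin : ∀ n, y i ≤ M * (Tt P n i).toReal + (dMoment P {0} (l+1) i).toReal := by
    intro n
    have h := EReal.coe_le_coe_iff.1 (key n i hi)
    refine le_trans h ?_
    rw [Gf, ENNReal.toReal_add (ENNReal.mul_ne_top ENNReal.ofReal_ne_top (hTne n i))
      (Af_ne_top P l herg n i), ENNReal.toReal_mul, ENNReal.toReal_ofReal hM0']
    refine add_le_add le_rfl ?_
    exact (ENNReal.toReal_le_toReal (Af_ne_top P l herg n i) (herg i)).2 (Af_le P l n i)
  have hTlim : Filter.Tendsto (fun n => (Tt P n i).toReal) Filter.atTop (𝓝 0) := by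
    have h := (ENNReal.tendsto_toReal (a := 0) (by simp)).comp (Tt_tendsto P hrec i)
    exact h
  have hlim : Filter.Tendsto
      (fun n => M * (Tt P n i).toReal + (dMoment P {0} (l+1) i).toReal)
      Filter.atTop (𝓝 (M * 0 + (dMoment P {0} (l+1) i).toReal)) :=
    ((hTlim.const_mul M).add tendsto_const_nhds)
  have hfin2 : y i ≤ (dMoment P {0} (l+1) i).toReal := by
    have := ge_of_tendsto hlim (Filter.Eventually.of_forall hfin)
    simpa using this
  rw [coe_ennreal_eq _ (herg i)]
  exact_mod_cast hfin2
end
end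

section
/- Let ℓ ≥ 0 be an integer and let Q be an irreducible regular Q-matrix on E = ℤ≥0 whose embedding chain Π is recurrent; take H = {0}. For each n ≥ 1 let x⁽ⁿ⁾ = (x⁽ⁿ⁾_i)_{1≤i≤n} be the minimal nonnegative solution of the truncated system x_i = Σ_{1≤j≤n, j≠i} (q(i,j)/q_i)·x_j + ((ℓ+1)/q_i)·𝔼_i σ_0^ℓ (1 ≤ i ≤ n), and set M_n := max_{1≤i≤n} x⁽ⁿ⁾_i. If the Q-process is ℓ-ergodic, then: (1) M_n < ∞ for each n ≥ 1; (2) for each i ≥ 1, x⁽ⁿ⁾_i increases in n with limit 𝔼_i σ_0^{ℓ+1}, and the sequence (M_n) is nondecreasing; (3) (M_n)_{n≥1} is bounded if and only if (𝔼_i σ_0^{ℓ+1})_{i≥1} is bounded; (4) in the case ℓ = 0, the Q-process is non-strongly ergodic if and only if sup_{n≥1} M_n = ∞. -/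
open scoped ENNReal NNReal BigOperators Classical Topology
open Filter Set

noncomputable section

lemma tsum_iSup_mono {ι : Type*} (f : ℕ → ι → ℝ≥0∞) (hf : Monotone f) :
    (∑' j, ⨆ n, f n j) = ⨆ n, ∑' j, f n j := by
  apply le_antisymm
  · rw [ENNReal.tsum_eq_iSup_sum]
    refine iSup_le fun s => ?_
    rw [ENNReal.finsetSum_iSup_of_monotone (fun j a b hab => hf hab j)]
    exact iSup_mono fun n => ENNReal.sum_le_tsum s
  · exact iSup_le fun n => ENNReal.tsum_le_tsum fun j => le_iSup (fun n => f n j) n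

namespace MinSolTheory
variable {ι : Type*} (A : ι → ι → ℝ≥0∞) (g : ι → ℝ≥0∞)

def iter : ℕ → ι → ℝ≥0∞
  | 0 => fun _ => 0
  | k + 1 => fun i => (∑' j, A i j * iter k j) + g i

lemma iter_mono : Monotone (iter A g) := by
  refine monotone_nat_of_le_succ ?_
  intro k
  induction k with
  | zero => intro i; simp [iter]
  | succ k ih =>
    intro i
    simp only [iter]
    gcongr
    exact ih _

lemma iter_le_supersol (y : ι → ℝ≥0∞) (hy : ∀ i, (∑' j, A i j * y j) + g i ≤ y i) :
    ∀ k i, iter A g k i ≤ y i := by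
  intro k
  induction k with
  | zero => intro i; simp [iter]
  | succ k ih =>
    intro i
    refine le_trans ?_ (hy i)
    simp only [iter]
    gcongr
    exact ih _

lemma isMinSol_iterSup : IsMinSol A g (fun i => ⨆ k, iter A g k i) := by
  constructor
  · intro i
    have : (∑' j, A i j * ⨆ k, iter A g k j) = ⨆ k, ∑' j, A i j * iter A g k j := by
      have := tsum_iSup_mono (fun k j => A i j * iter A g k j)
        (fun a b hab j => mul_le_mul_right (iter_mono A g hab j) _)
      simpa [ENNReal.mul_iSup] using this
    rw [this]
    rw [ENNReal.iSup_add]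
    apply le_antisymm
    · refine iSup_le fun k => ?_
      rcases k with _ | k
      · simpa [iter] using le_iSup (fun k => (∑' j, A i j * iter A g k j) + g i) 0
      · exact le_iSup (fun k => (∑' j, A i j * iter A g k j) + g i) k
    · refine iSup_le fun k => ?_
      exact le_iSup (fun k => iter A g k i) (k + 1)
  · intro y hy i
    exact iSup_le fun k => iter_le_supersol A g y (fun i => (hy i).ge) k i

lemma minSol_eq_iterSup {x : ι → ℝ≥0∞} (hx : IsMinSol A g x) :
    ∀ i, x i = ⨆ k, iter A g k i := by
  intro i
  apply le_antisymm (hx.2 _ (isMinSol_iterSup A g).1 i)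
  exact iSup_le fun k => iter_le_supersol A g x (fun i => (hx.1 i).ge) k i

lemma minSol_le_supersol {x y : ι → ℝ≥0∞} (hx : IsMinSol A g x)
    (hy : ∀ i, (∑' j, A i j * y j) + g i ≤ y i) : ∀ i, x i ≤ y i := by
  intro i
  rw [minSol_eq_iterSup A g hx]
  exact iSup_le fun k => iter_le_supersol A g y hy k i

end MinSolTheory

lemma embed_row_sum {E : Type*} {q : E → E → ℝ} (hq : IsQMatrix q) (i : E) :
    (∑' j, embed q i j) = 1 := by
  have hnn : ∀ j, 0 ≤ (if j = i then 0 else q i j) / (-q i i) := by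
    intro j
    refine div_nonneg ?_ (hq.diag_neg i).le
    split_ifs with h
    · exact le_rfl
    · exact hq.offdiag_nonneg i j (fun hji => h (by rw [hji]))
  have heq : ∀ j, embed q i j = ENNReal.ofReal ((if j = i then 0 else q i j) / (-q i i)) := by
    intro j
    unfold embed
    split_ifs with h <;> simp
  calc (∑' j, embed q i j)
      = ∑' j, ENNReal.ofReal ((if j = i then 0 else q i j) / (-q i i)) := by
        exact tsum_congr heq
    _ = ENNReal.ofReal (∑' j, (if j = i then 0 else q i j) / (-q i i)) :=
        (ENNReal.ofReal_tsum_of_nonneg hnn ((hq.row_hasSum i).summable.div_const _)).symm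
    _ = 1 := by
        rw [tsum_div_const, (hq.row_hasSum i).tsum_eq,
          div_self (ne_of_gt (hq.diag_neg i))]
        exact ENNReal.ofReal_one

lemma tsum_split {α : Type*} [DecidableEq α] (f : α → ℝ≥0∞) (b : α) :
    (∑' x, f x) = f b + ∑' x, if x = b then 0 else f x := by
  convert ENNReal.tsum_eq_add_tsum_ite b using 2
  apply tsum_congr
  intro x
  split_ifs <;> rfl

section Trunc
variable (q : ℕ → ℕ → ℝ) (n : ℕ)

instance fintypeS : Fintype {i : ℕ // 1 ≤ i ∧ i ≤ n} := by
  exact inferInstanceAs (Fintype ↥(Set.Icc 1 n))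

abbrev Sn := {i : ℕ // 1 ≤ i ∧ i ≤ n}

/-- the vector `T^k 1`. -/
def pow1 : ℕ → Sn n → ℝ≥0∞
  | 0 => fun _ => 1
  | k + 1 => fun i => ∑' j : Sn n, embed q i.1 j.1 * pow1 k j

variable {q n}

lemma rowsum_le (hq : IsQMatrix q) (i : Sn n) :
    (∑' j : Sn n, embed q i.1 j.1) ≤ 1 := by
  rw [show (∑' j : Sn n, embed q i.1 j.1)
      = ∑' j : ↥{x : ℕ | 1 ≤ x ∧ x ≤ n}, embed q i.1 j.1 from rfl,
    tsum_subtype {x : ℕ | 1 ≤ x ∧ x ≤ n} (embed q i.1)]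
  rw [← embed_row_sum hq i.1]
  refine ENNReal.tsum_le_tsum fun j => ?_
  classical
  by_cases h : j ∈ {x : ℕ | 1 ≤ x ∧ x ≤ n} <;> simp [Set.indicator_apply, h]

lemma rowsum_lt_one (hq : IsQMatrix q) (i : Sn n) (b : ℕ) (hb : ¬(1 ≤ b ∧ b ≤ n))
    (hpos : 0 < embed q i.1 b) : (∑' j : Sn n, embed q i.1 j.1) < 1 := by
  have hle : (∑' j : Sn n, embed q i.1 j.1)
      ≤ ∑' j : ℕ, if j = b then 0 else embed q i.1 j := by
    rw [show (∑' j : Sn n, embed q i.1 j.1)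
        = ∑' j : ↥{x : ℕ | 1 ≤ x ∧ x ≤ n}, embed q i.1 j.1 from rfl,
      tsum_subtype {x : ℕ | 1 ≤ x ∧ x ≤ n} (embed q i.1)]
    refine ENNReal.tsum_le_tsum fun j => ?_
    by_cases hj : j = b
    · subst hj
      simp [Set.indicator_apply, hb]
    · by_cases h : j ∈ {x : ℕ | 1 ≤ x ∧ x ≤ n} <;> simp [Set.indicator_apply, h, hj]
  have hsplit : (∑' j : ℕ, embed q i.1 j)
      = embed q i.1 b + ∑' j : ℕ, if j = b then 0 else embed q i.1 j :=
    tsum_split _ b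
  have h1 : embed q i.1 b + (∑' j : Sn n, embed q i.1 j.1) ≤ 1 := by
    rw [← embed_row_sum hq i.1, hsplit]
    exact add_le_add_right hle _
  have hne : (∑' j : Sn n, embed q i.1 j.1) ≠ ⊤ :=
    ne_top_of_le_ne_top ENNReal.one_ne_top (rowsum_le hq i)
  calc (∑' j : Sn n, embed q i.1 j.1)
      < embed q i.1 b + (∑' j : Sn n, embed q i.1 j.1) := by
        rw [add_comm]
        exact ENNReal.lt_add_right hne hpos.ne'
    _ ≤ 1 := h1

lemma pow1_le_one (hq : IsQMatrix q) : ∀ k (i : Sn n), pow1 q n k i ≤ 1 := by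
  intro k
  induction k with
  | zero => intro i; simp [pow1]
  | succ k ih =>
    intro i
    calc pow1 q n (k+1) i = ∑' j : Sn n, embed q i.1 j.1 * pow1 q n k j := rfl
      _ ≤ ∑' j : Sn n, embed q i.1 j.1 * 1 :=
          ENNReal.tsum_le_tsum fun j => mul_le_mul_right (ih j) _
      _ ≤ 1 := by simpa using rowsum_le hq i

lemma pow1_antitone (hq : IsQMatrix q) : ∀ k, ∀ i : Sn n,
    pow1 q n (k + 1) i ≤ pow1 q n k i := by
  intro k
  induction k with
  | zero =>
    intro i
    calc pow1 q n 1 i ≤ 1 := pow1_le_one hq 1 i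
      _ = pow1 q n 0 i := rfl
  | succ k ih =>
    intro i
    exact ENNReal.tsum_le_tsum fun j => mul_le_mul_right (ih j) _

lemma pow1_lt_one_succ (hq : IsQMatrix q) {k} {i b : Sn n}
    (hab : 0 < embed q i.1 b.1) (hlt : pow1 q n k b < 1) :
    pow1 q n (k + 1) i < 1 := by
  have hsplit : pow1 q n (k+1) i
      = embed q i.1 b.1 * pow1 q n k b
        + ∑' j : Sn n, if j = b then 0 else embed q i.1 j.1 * pow1 q n k j :=
    tsum_split _ b
  have hrest : (∑' j : Sn n, if j = b then 0 else embed q i.1 j.1 * pow1 q n k j)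
      ≤ ∑' j : Sn n, if j = b then 0 else embed q i.1 j.1 := by
    refine ENNReal.tsum_le_tsum fun j => ?_
    split_ifs
    · exact le_rfl
    · simpa using mul_le_mul_right (pow1_le_one hq k j) _
  have hfin : embed q i.1 b.1 ≠ ⊤ := by
    refine ne_top_of_le_ne_top ENNReal.one_ne_top ?_
    refine le_trans ?_ (rowsum_le hq i)
    exact ENNReal.le_tsum b
  have hstrict : embed q i.1 b.1 * pow1 q n k b < embed q i.1 b.1 := by
    conv_rhs => rw [← mul_one (embed q i.1 b.1)]
    exact ENNReal.mul_lt_mul_right hab.ne' hfin hlt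
  calc pow1 q n (k+1) i
      = embed q i.1 b.1 * pow1 q n k b
        + ∑' j : Sn n, if j = b then 0 else embed q i.1 j.1 * pow1 q n k j := hsplit
    _ ≤ embed q i.1 b.1 * pow1 q n k b
        + ∑' j : Sn n, if j = b then 0 else embed q i.1 j.1 :=
          add_le_add_right hrest _
    _ < embed q i.1 b.1 + ∑' j : Sn n, if j = b then 0 else embed q i.1 j.1 := by
          refine ENNReal.add_lt_add_right ?_ hstrict
          refine ne_top_of_le_ne_top ENNReal.one_ne_top ?_
          refine le_trans ?_ (rowsum_le hq i)
          refine ENNReal.tsum_le_tsum fun j => ?_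
          split_ifs <;> simp
    _ = ∑' j : Sn n, embed q i.1 j.1 := (tsum_split (fun j : Sn n => embed q i.1 j.1) b).symm
    _ ≤ 1 := rowsum_le hq i

end Trunc

section Trunc2
variable {q : ℕ → ℕ → ℝ} {n : ℕ}

lemma embed_pos (hq : IsQMatrix q) {a b : ℕ} (h : 0 < q a b) : 0 < embed q a b := by
  have hab : b ≠ a := by
    rintro rfl
    have := hq.diag_neg b
    linarith
  unfold embed
  rw [if_neg hab]
  exact ENNReal.ofReal_pos.2 (div_pos h (hq.diag_neg a))

lemma pow1_one_lt (hq : IsQMatrix q) (i : Sn n) (b : ℕ) (hb : ¬(1 ≤ b ∧ b ≤ n))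
    (h : 0 < q i.1 b) : pow1 q n 1 i < 1 := by
  have : pow1 q n 1 i = ∑' j : Sn n, embed q i.1 j.1 := by
    simp [pow1]
  rw [this]
  exact rowsum_lt_one hq i b hb (embed_pos hq h)

lemma exists_pow1_lt_one (hq : IsQMatrix q) (hirr : MatIrreducible q) (i : Sn n) :
    ∃ k, 1 ≤ k ∧ pow1 q n k i < 1 := by
  suffices H : ∀ a, Relation.TransGen (fun x y => 0 < q x y) a 0 →
      ∀ h : 1 ≤ a ∧ a ≤ n, ∃ k, 1 ≤ k ∧ pow1 q n k ⟨a, h⟩ < 1 by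
    obtain ⟨a, ha⟩ := i
    exact H a (hirr a 0 (by omega)) ha
  intro a ha
  induction ha using Relation.TransGen.head_induction_on with
  | single hr =>
    intro h
    exact ⟨1, le_rfl, pow1_one_lt hq _ 0 (by omega) hr⟩
  | head hr _ ihc =>
    rename_i a' c _
    intro h
    by_cases hc : 1 ≤ c ∧ c ≤ n
    · obtain ⟨k, hk1, hk⟩ := ihc hc
      exact ⟨k + 1, by omega, pow1_lt_one_succ hq (b := ⟨c, hc⟩) (embed_pos hq hr) hk⟩
    · exact ⟨1, le_rfl, pow1_one_lt hq _ c hc hr⟩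

end Trunc2

section Trunc3
open MinSolTheory
variable {q : ℕ → ℕ → ℝ} {n : ℕ}

lemma growth_bound (hq : IsQMatrix q) (g : Sn n → ℝ≥0∞) (G : ℝ≥0∞) (hG : ∀ i, g i ≤ G)
    (s : ℝ≥0∞) (k : ℕ) (hk : ∀ i, iter (fun i j : Sn n => embed q i.1 j.1) g k i ≤ s) :
    ∀ r i, iter (fun i j : Sn n => embed q i.1 j.1) g (k + r) i
      ≤ s * pow1 q n r i + (r : ℝ≥0∞) * G := by
  set A := fun i j : Sn n => embed q i.1 j.1 with hA
  intro r
  induction r with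
  | zero =>
    intro i
    simpa [pow1] using hk i
  | succ r ih =>
    intro i
    have : k + (r + 1) = (k + r) + 1 := by ring
    rw [this]
    calc iter A g ((k + r) + 1) i
        = (∑' j, A i j * iter A g (k + r) j) + g i := rfl
      _ ≤ (∑' j, A i j * (s * pow1 q n r j + (r : ℝ≥0∞) * G)) + G := by
          gcongr with j
          · exact ih j
          · exact hG i
      _ = (∑' j, (s * (A i j * pow1 q n r j) + A i j * ((r : ℝ≥0∞) * G))) + G := by
          congr 1
          apply tsum_congr
          intro j
          ring
      _ = (s * ∑' j, A i j * pow1 q n r j) + ((r : ℝ≥0∞) * G) * (∑' j, A i j) + G := by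
          rw [ENNReal.tsum_add, ENNReal.tsum_mul_left]
          congr 2
          rw [← ENNReal.tsum_mul_left]
          apply tsum_congr
          intro j
          ring
      _ ≤ s * pow1 q n (r + 1) i + ((r : ℝ≥0∞) * G) * 1 + G := by
          gcongr
          · exact le_rfl
          · exact rowsum_le hq i
      _ = s * pow1 q n (r + 1) i + ((r : ℝ≥0∞) + 1) * G := by
          rw [mul_one, add_assoc, add_mul, one_mul]
      _ = s * pow1 q n (r + 1) i + ((r + 1 : ℕ) : ℝ≥0∞) * G := by
          push_cast
          ring_nf
    
lemma trunc_minSol_le (hq : IsQMatrix q) (hirr : MatIrreducible q) (hn : 1 ≤ n)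
    (g : Sn n → ℝ≥0∞) (hg : ∀ i, g i ≠ ⊤) (x : Sn n → ℝ≥0∞)
    (hx : IsMinSol (fun i j : Sn n => embed q i.1 j.1) g x) :
    ∃ D : ℝ≥0∞, D ≠ ⊤ ∧ ∀ i, x i ≤ D := by
  set A := fun i j : Sn n => embed q i.1 j.1 with hA
  haveI : Nonempty (Sn n) := ⟨⟨1, le_rfl, hn⟩⟩
  -- choose escape times
  choose kk hkk1 hkklt using fun i : Sn n => exists_pow1_lt_one hq hirr i
  set K : ℕ := Finset.univ.sup kk with hK
  have hKge : ∀ i, kk i ≤ K := fun i => Finset.le_sup (Finset.mem_univ i)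
  have hK1 : 1 ≤ K := le_trans (hkk1 (Classical.arbitrary _)) (hKge _)
  have hanti : ∀ i : Sn n, Antitone (fun k => pow1 q n k i) :=
    fun i => antitone_nat_of_succ_le (fun k => pow1_antitone hq k i)
  have hKlt : ∀ i, pow1 q n K i < 1 :=
    fun i => lt_of_le_of_lt (hanti i (hKge i)) (hkklt i)
  set θ : ℝ≥0∞ := ⨆ i, pow1 q n K i with hθ
  have hθlt : θ < 1 := by
    obtain ⟨i0, hi0⟩ := Finite.exists_max (fun i : Sn n => pow1 q n K i)
    exact lt_of_le_of_lt (iSup_le hi0) (hKlt i0)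
  have hθle : ∀ i, pow1 q n K i ≤ θ := fun i => le_iSup _ i
  set G : ℝ≥0∞ := ⨆ i, g i with hG
  have hGle : ∀ i, g i ≤ G := fun i => le_iSup _ i
  have hGne : G ≠ ⊤ := by
    obtain ⟨i0, hi0⟩ := Finite.exists_max g
    exact ne_top_of_le_ne_top (hg i0) (iSup_le hi0)
  have hsub0 : (1 : ℝ≥0∞) - θ ≠ 0 := by
    simp only [ne_eq, tsub_eq_zero_iff_le, not_le]
    exact hθlt
  set D : ℝ≥0∞ := (K : ℝ≥0∞) * G * (1 - θ)⁻¹ with hD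
  have hDne : D ≠ ⊤ :=
    ENNReal.mul_ne_top (ENNReal.mul_ne_top (ENNReal.natCast_ne_top K) hGne)
      (ENNReal.inv_ne_top.2 hsub0)
  -- key algebraic identity: D * θ + K * G ≤ D
  have hkey : D * θ + (K : ℝ≥0∞) * G ≤ D := by
    have h1θ : θ + (1 - θ) = 1 := add_tsub_cancel_of_le hθlt.le
    have hcancel : (1 - θ) * (1 - θ)⁻¹ = 1 :=
      ENNReal.mul_inv_cancel hsub0 (by
        exact ne_top_of_le_ne_top ENNReal.one_ne_top tsub_le_self)
    have : D * θ + (K : ℝ≥0∞) * G = (K : ℝ≥0∞) * G * ((1 - θ)⁻¹ * θ + 1) := by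
      rw [mul_add, mul_one, ← mul_assoc]
    rw [this]
    have h2 : (1 - θ)⁻¹ * θ + 1 = (1 - θ)⁻¹ := by
      calc (1 - θ)⁻¹ * θ + 1 = (1 - θ)⁻¹ * θ + (1 - θ) * (1 - θ)⁻¹ := by rw [hcancel]
        _ = (1 - θ)⁻¹ * θ + (1 - θ)⁻¹ * (1 - θ) := by rw [mul_comm (1 - θ)]
        _ = (1 - θ)⁻¹ * (θ + (1 - θ)) := by rw [mul_add]
        _ = (1 - θ)⁻¹ := by rw [h1θ, mul_one]
    rw [h2, hD]
  -- induction: iter (K * m) ≤ D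
  have hiter : ∀ m, ∀ i, iter A g (K * m) i ≤ D := by
    intro m
    induction m with
    | zero => intro i; simp [MinSolTheory.iter]
    | succ m ih =>
      intro i
      have hKm : K * (m + 1) = K * m + K := by ring
      rw [hKm]
      calc iter A g (K * m + K) i ≤ D * pow1 q n K i + (K : ℝ≥0∞) * G :=
            growth_bound hq g G hGle D (K * m) ih K i
        _ ≤ D * θ + (K : ℝ≥0∞) * G := by gcongr; exact hθle i
        _ ≤ D := hkey
  refine ⟨D, hDne, fun i => ?_⟩
  rw [minSol_eq_iterSup A g hx]
  refine iSup_le fun k => ?_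
  calc iter A g k i ≤ iter A g (K * k) i := by
        refine MinSolTheory.iter_mono A g ?_ i
        calc k = 1 * k := (one_mul k).symm
          _ ≤ K * k := Nat.mul_le_mul_right k hK1
    _ ≤ D := hiter k i

end Trunc3

section Helpers

lemma tsum_subtype_le_full {α : Type*} {S : Set α} (f F : α → ℝ≥0∞)
    (h : ∀ j ∈ S, f j ≤ F j) : (∑' j : S, f j.1) ≤ ∑' j, F j := by
  rw [tsum_subtype S f]
  refine ENNReal.tsum_le_tsum fun j => ?_
  by_cases hj : j ∈ S
  · rw [Set.indicator_of_mem hj]; exact h j hj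
  · rw [Set.indicator_of_notMem hj]; exact zero_le

lemma tsum_subtype_eq_full {α : Type*} {S : Set α} (f F : α → ℝ≥0∞)
    (hin : ∀ j ∈ S, f j = F j) (hout : ∀ j ∉ S, F j = 0) :
    (∑' j : S, f j.1) = ∑' j, F j := by
  rw [tsum_subtype S f]
  refine tsum_congr fun j => ?_
  by_cases hj : j ∈ S
  · rw [Set.indicator_of_mem hj]; exact hin j hj
  · rw [Set.indicator_of_notMem hj, hout j hj]

end Helpers

/-- Finite truncation approximation of the moments of return times. -/
theorem truncation_approximation (l : ℕ) (q : ℕ → ℕ → ℝ)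
    (hq : IsQMatrix q) (hirr : MatIrreducible q) (hreg : QRegular q)
    (hrec : MatRecurrent (embed q))
    (m : ℕ → ℕ → ℝ≥0∞) (hm : IsMomentSeq q {0} m)
    (xs : (n : ℕ) → ({i : ℕ // 1 ≤ i ∧ i ≤ n} → ℝ≥0∞))
    (hxs : ∀ n : ℕ, IsMinSol
      (fun i j : {i : ℕ // 1 ≤ i ∧ i ≤ n} => embed q i.1 j.1)
      (fun i : {i : ℕ // 1 ≤ i ∧ i ≤ n} =>
        (((l : ℝ≥0∞) + 1) / ENNReal.ofReal (-q i.1 i.1)) * m l i.1)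
      (xs n))
    (hlerg : ∀ i, m l i ≠ ⊤) :
    (∀ n : ℕ, 1 ≤ n → (⨆ i : {i : ℕ // 1 ≤ i ∧ i ≤ n}, xs n i) ≠ ⊤) ∧
    ((∀ (i : ℕ) (hi : 1 ≤ i),
      (∀ (n₁ n₂ : ℕ) (h₁ : i ≤ n₁) (h₂ : n₁ ≤ n₂),
        xs n₁ ⟨i, hi, h₁⟩ ≤ xs n₂ ⟨i, hi, le_trans h₁ h₂⟩) ∧
      (⨆ (n : ℕ) (h : i ≤ n), xs n ⟨i, hi, h⟩) = m (l + 1) i) ∧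
      (∀ n₁ n₂ : ℕ, n₁ ≤ n₂ →
        (⨆ i : {i : ℕ // 1 ≤ i ∧ i ≤ n₁}, xs n₁ i) ≤
          ⨆ i : {i : ℕ // 1 ≤ i ∧ i ≤ n₂}, xs n₂ i)) ∧
    ((⨆ n : ℕ, ⨆ i : {i : ℕ // 1 ≤ i ∧ i ≤ n}, xs n i) ≠ ⊤ ↔
      (⨆ i : {i : ℕ // 1 ≤ i}, m (l + 1) i.1) ≠ ⊤) ∧
    (l = 0 →
      ((⨆ i : ℕ, m 1 i) = ⊤ ↔
        (⨆ n : ℕ, ⨆ i : {i : ℕ // 1 ≤ i ∧ i ≤ n}, xs n i) = ⊤)) := by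
    classical
  set A' : ℕ → ℕ → ℝ≥0∞ := fun i j => @ite ℝ≥0∞ (j ∈ ({0} : Set ℕ)) (Classical.propDecidable _) 0 (embed q i j) with hA'
  set gg : ℕ → ℝ≥0∞ := fun i => (((l : ℝ≥0∞) + 1) / ENNReal.ofReal (-q i i)) * m l i with hgg
  have hfull : IsMinSol A' gg (m (l + 1)) := hm.2 l
  have hA'le : ∀ i j, A' i j ≤ embed q i j := by
    intro i j
    simp only [hA']
    split_ifs
    · exact zero_le
    · exact le_rfl
  have hA'eq : ∀ i j : ℕ, 1 ≤ j → A' i j = embed q i j := by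
    intro i j hj
    simp only [hA', Set.mem_singleton_iff]
    rw [if_neg (by omega)]
  have hA'0 : ∀ i, A' i 0 = 0 := by
    intro i
    simp [hA']
  have hggne : ∀ i, gg i ≠ ⊤ := by
    intro i
    simp only [hgg]
    refine ENNReal.mul_ne_top ?_ (hlerg i)
    refine (ENNReal.div_lt_top ?_ ?_).ne
    · exact ENNReal.add_ne_top.2 ⟨ENNReal.natCast_ne_top l, ENNReal.one_ne_top⟩
    · exact (ENNReal.ofReal_pos.2 (hq.diag_neg i)).ne'
  -- extension of truncated solutions to ℕ
  set Z : ℕ → ℕ → ℝ≥0∞ :=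
    fun n j => if h : 1 ≤ j ∧ j ≤ n then xs n ⟨j, h⟩ else 0 with hZ
  have hZpos : ∀ (n j : ℕ) (h : 1 ≤ j ∧ j ≤ n), Z n j = xs n ⟨j, h⟩ := by
    intro n j h
    simp only [hZ]
    rw [dif_pos h]
  have hZneg : ∀ (n j : ℕ), ¬(1 ≤ j ∧ j ≤ n) → Z n j = 0 := by
    intro n j h
    simp only [hZ]
    rw [dif_neg h]
  have hZroweq : ∀ (n : ℕ) (i : ℕ),
      (∑' j : Sn n, embed q i j.1 * xs n j) = ∑' j : ℕ, A' i j * Z n j := by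
    intro n i
    have h1 : (∑' j : Sn n, embed q i j.1 * xs n j)
        = ∑' j : ↥{x : ℕ | 1 ≤ x ∧ x ≤ n}, embed q i j.1 * Z n j.1 := by
      refine tsum_congr fun j => ?_
      rw [hZpos n j.1 j.2]
    rw [h1]
    refine tsum_subtype_eq_full (S := {x : ℕ | 1 ≤ x ∧ x ≤ n})
      (fun x => embed q i x * Z n x) (fun x => A' i x * Z n x) ?_ ?_
    · intro j hj
      simp only [hA'eq i j hj.1]
    · intro j hj
      simp only [hZneg n j hj, mul_zero]
  have heqn : ∀ (n : ℕ) (i : Sn n),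
      xs n i = (∑' j : ℕ, A' i.1 j * Z n j) + gg i.1 := by
    intro n i
    rw [← hZroweq n i.1]
    exact (hxs n).1 i
  -- comparison with supersolutions of the full system
  have hL1 : ∀ Y : ℕ → ℝ≥0∞, (∀ i, (∑' j, A' i j * Y j) + gg i ≤ Y i) →
      ∀ (n : ℕ) (i : Sn n), xs n i ≤ Y i.1 := by
    intro Y hY n i
    refine MinSolTheory.minSol_le_supersol _ _ (y := fun i' : Sn n => Y i'.1) (hxs n) (fun i' => ?_) i
    refine le_trans (add_le_add_left ?_ _) (hY i'.1)
    exact tsum_subtype_le_full (S := {x : ℕ | 1 ≤ x ∧ x ≤ n})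
      (fun j => embed q i'.1 j * Y j) (fun j => A' i'.1 j * Y j)
      (fun j hj => by simp only [hA'eq i'.1 j hj.1]; exact le_rfl)
  have hle_m : ∀ (n : ℕ) (i : Sn n), xs n i ≤ m (l + 1) i.1 :=
    hL1 (m (l + 1)) (fun i => (hfull.1 i).ge)
  -- monotonicity in n
  have hmono : ∀ n₁ n₂ : ℕ, ∀ h : n₁ ≤ n₂, ∀ i : Sn n₁,
      xs n₁ i ≤ xs n₂ ⟨i.1, i.2.1, le_trans i.2.2 h⟩ := by
    intro n₁ n₂ h i
    have hsup : ∀ i' : Sn n₁,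
        (∑' j : Sn n₁, embed q i'.1 j.1 * Z n₂ j.1) + gg i'.1 ≤ Z n₂ i'.1 := by
      intro i'
      have hi2 : 1 ≤ i'.1 ∧ i'.1 ≤ n₂ := ⟨i'.2.1, le_trans i'.2.2 h⟩
      rw [hZpos n₂ i'.1 hi2, heqn n₂ ⟨i'.1, hi2⟩]
      refine add_le_add_left ?_ _
      exact tsum_subtype_le_full (S := {x : ℕ | 1 ≤ x ∧ x ≤ n₁})
        (fun j => embed q i'.1 j * Z n₂ j)
        (fun j => A' i'.1 j * Z n₂ j) (fun j hj => by simp only [hA'eq i'.1 j hj.1]; exact le_rfl)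
    have h2 := MinSolTheory.minSol_le_supersol _ (fun i : Sn n₁ => gg i.1) (hxs n₁)
      (fun i' => hsup i') i
    rwa [hZpos n₂ i.1 ⟨i.2.1, le_trans i.2.2 h⟩] at h2
  have hZmono : ∀ j : ℕ, Monotone fun n => Z n j := by
    intro j n₁ n₂ h
    simp only
    by_cases h1 : 1 ≤ j ∧ j ≤ n₁
    · rw [hZpos n₁ j h1, hZpos n₂ j ⟨h1.1, le_trans h1.2 h⟩]
      exact hmono n₁ n₂ h ⟨j, h1⟩
    · rw [hZneg n₁ j h1]
      exact zero_le
  set Y1 : ℕ → ℝ≥0∞ := fun j => ⨆ n, Z n j with hY1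
  have hY1def : ∀ j, Y1 j = ⨆ n, Z n j := fun j => by simp only [hY1]
  have hY1eq : ∀ i : ℕ, 1 ≤ i → Y1 i = (∑' j, A' i j * Y1 j) + gg i := by
    intro i hi
    have h1 : (∑' j, A' i j * Y1 j) = ⨆ n, ∑' j, A' i j * Z n j := by
      rw [← tsum_iSup_mono (fun n j => A' i j * Z n j)
        (fun n₁ n₂ h j => mul_le_mul_right (hZmono j h) _)]
      refine tsum_congr fun j => ?_
      rw [hY1def j, ENNReal.mul_iSup]
    rw [h1, ENNReal.iSup_add, hY1def i]
    apply le_antisymm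
    · refine iSup_le fun n => ?_
      by_cases h : i ≤ n
      · rw [hZpos n i ⟨hi, h⟩, heqn n ⟨i, hi, h⟩]
        exact le_iSup (fun n => (∑' j, A' i j * Z n j) + gg i) n
      · rw [hZneg n i (by omega)]
        exact zero_le
    · refine iSup_le fun n => ?_
      have hin : i ≤ n ⊔ i := le_max_right _ _
      calc (∑' j, A' i j * Z n j) + gg i
          ≤ (∑' j, A' i j * Z (n ⊔ i) j) + gg i := by
            refine add_le_add_left (ENNReal.tsum_le_tsum fun j => ?_) _
            exact mul_le_mul_right (hZmono j (le_max_left _ _)) _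
        _ = xs (n ⊔ i) ⟨i, hi, hin⟩ := (heqn (n ⊔ i) ⟨i, hi, hin⟩).symm
        _ = Z (n ⊔ i) i := (hZpos (n ⊔ i) i ⟨hi, hin⟩).symm
        _ ≤ ⨆ n, Z n i := le_iSup (fun n => Z n i) (n ⊔ i)
  set Y : ℕ → ℝ≥0∞ :=
    fun i => if i = 0 then (∑' j, A' 0 j * Y1 j) + gg 0 else Y1 i with hY
  have hYpos : ∀ i : ℕ, i ≠ 0 → Y i = Y1 i := by
    intro i hi
    simp only [hY]
    rw [if_neg hi]
  have hY0 : Y 0 = (∑' j, A' 0 j * Y1 j) + gg 0 := by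
    simp [hY]
  have hswap : ∀ i, (∑' j, A' i j * Y j) = ∑' j, A' i j * Y1 j := by
    intro i
    refine tsum_congr fun j => ?_
    by_cases hj : j = 0
    · subst hj; rw [hA'0, zero_mul, zero_mul]
    · rw [hYpos j hj]
  have hYsol : ∀ i, Y i = (∑' j, A' i j * Y j) + gg i := by
    intro i
    rw [hswap]
    by_cases h : i = 0
    · subst h; exact hY0
    · rw [hYpos i h]
      exact hY1eq i (Nat.one_le_iff_ne_zero.2 h)
  have hmY : ∀ i, m (l + 1) i ≤ Y i := hfull.2 Y hYsol
  have hZ_le_m : ∀ (n j : ℕ), Z n j ≤ m (l + 1) j := by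
    intro n j
    by_cases h1 : 1 ≤ j ∧ j ≤ n
    · rw [hZpos n j h1]
      exact hle_m n ⟨j, h1⟩
    · rw [hZneg n j h1]
      exact zero_le
  have hlimit : ∀ i : ℕ, 1 ≤ i → Y1 i = m (l + 1) i := by
    intro i hi
    refine le_antisymm ?_ ?_
    · rw [hY1def i]
      exact iSup_le fun n => hZ_le_m n i
    · have h2 := hmY i
      rwa [hYpos i (by omega)] at h2
  -- the limit claim in the required form
  have hlim' : ∀ (i : ℕ) (hi : 1 ≤ i),
      (⨆ (n : ℕ) (h : i ≤ n), xs n ⟨i, hi, h⟩) = m (l + 1) i := by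
    intro i hi
    rw [← hlimit i hi, hY1def i]
    refine iSup_congr fun n => ?_
    by_cases h : i ≤ n
    · rw [iSup_pos h, hZpos n i ⟨hi, h⟩]
    · rw [iSup_neg h, hZneg n i (by omega)]
      rfl
  -- the big sup identity
  have hsupeq : (⨆ (n : ℕ) (i : Sn n), xs n i)
      = ⨆ i : {i : ℕ // 1 ≤ i}, m (l + 1) i.1 := by
    apply le_antisymm
    · refine iSup_le fun n => iSup_le fun i => ?_
      exact le_trans (hle_m n i)
        (le_iSup (fun i : {i : ℕ // 1 ≤ i} => m (l + 1) i.1) ⟨i.1, i.2.1⟩)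
    · refine iSup_le fun i => ?_
      rw [← hlimit i.1 i.2, hY1def i.1]
      refine iSup_le fun n => ?_
      by_cases h1 : 1 ≤ i.1 ∧ i.1 ≤ n
      · rw [hZpos n i.1 h1]
        exact le_trans (le_iSup (fun j : Sn n => xs n j) ⟨i.1, h1⟩)
          (le_iSup (fun n => ⨆ j : Sn n, xs n j) n)
      · rw [hZneg n i.1 h1]
        exact zero_le
  refine ⟨?_, ⟨?_, ?_⟩, ?_, ?_⟩
  · -- (1) finiteness
    intro n hn
    obtain ⟨D, hD, hb⟩ := trunc_minSol_le hq hirr hn (fun i : Sn n => gg i.1)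
      (fun i => hggne i.1) (xs n) (hxs n)
    exact ne_top_of_le_ne_top hD (iSup_le hb)
  · -- (2a) monotone in n and limit
    intro i hi
    exact ⟨fun n₁ n₂ h₁ h₂ => hmono n₁ n₂ h₂ ⟨i, hi, h₁⟩, hlim' i hi⟩
  · -- (2b) M_n monotone
    intro n₁ n₂ h
    refine iSup_le fun i => ?_
    exact le_trans (hmono n₁ n₂ h i)
      (le_iSup (fun j : Sn n₂ => xs n₂ j) ⟨i.1, i.2.1, le_trans i.2.2 h⟩)
  · -- (3)
    rw [hsupeq]
  · -- (4)
    intro hl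
    subst hl
    rw [hsupeq]
    constructor
    · intro h
      by_contra hne
      set S := ⨆ i : {i : ℕ // 1 ≤ i}, m (0 + 1) i.1 with hSdef
      have hS : S ≠ ⊤ := hne
      have hm0 : m (0 + 1) 0 ≤ S + gg 0 := by
        rw [hfull.1 0]
        refine add_le_add_left ?_ _
        calc (∑' j, A' 0 j * m (0 + 1) j) ≤ ∑' j, A' 0 j * S := by
              refine ENNReal.tsum_le_tsum fun j => ?_
              by_cases hj : j = 0
              · subst hj; rw [hA'0, zero_mul, zero_mul]
              · refine mul_le_mul_right ?_ _
                exact le_iSup (fun i : {i : ℕ // 1 ≤ i} => m (0 + 1) i.1)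
                  ⟨j, Nat.one_le_iff_ne_zero.2 hj⟩
          _ = S * ∑' j, A' 0 j := by
              rw [← ENNReal.tsum_mul_left]
              exact tsum_congr fun j => mul_comm _ _
          _ ≤ S * 1 := by
              refine mul_le_mul_right ?_ _
              rw [← embed_row_sum hq 0]
              exact ENNReal.tsum_le_tsum fun j => hA'le 0 j
          _ = S := mul_one S
      have hB : S + gg 0 ≠ ⊤ := ENNReal.add_ne_top.2 ⟨hS, hggne 0⟩
      have hall : (⨆ i : ℕ, m (0 + 1) i) ≤ S + gg 0 := by
        refine iSup_le fun i => ?_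
        by_cases hi : i = 0
        · subst hi; exact hm0
        · exact le_trans (le_iSup (fun i : {i : ℕ // 1 ≤ i} => m (0 + 1) i.1)
            ⟨i, Nat.one_le_iff_ne_zero.2 hi⟩) le_self_add
      rw [show (0 : ℕ) + 1 = 1 from rfl] at hall
      rw [h] at hall
      exact hB (top_le_iff.1 hall)
    · intro h
      refine top_le_iff.1 ?_
      rw [← h]
      exact iSup_le fun i => le_iSup (m (0 + 1)) i.1
end
end

section
/- Let E be a nonempty set and let A be a map from functions E → [0,∞] to functions E → [0,∞] satisfying: A0 = 0; A(c₁f₁ + c₂f₂) = c₁·Af₁ + c₂·Af₂ for all c₁, c₂ ∈ [0,∞) and all f₁, f₂ : E → [0,∞]; and Af_n ↑ Af pointwise whenever f_n ↑ f pointwise. Let g : E → [0,∞] and let f* be the minimal nonnegative solution of f = Af + g. If a function f̃ : E → [0,∞] satisfies f̃ ≤ A f̃ + g pointwise and f̃ ≤ p·f* pointwise for some p ∈ [0,∞), then f̃ ≤ f* pointwise. -/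
open scoped ENNReal NNReal BigOperators Classical Topology
open Filter Set

noncomputable section

/-- A nonnegative subsolution dominated by a finite multiple of the minimal solution is
dominated by the minimal solution itself. -/
theorem subsolution_le_minimal_solution {E : Type*} [Nonempty E]
    (A : (E → ℝ≥0∞) → (E → ℝ≥0∞))
    (hA0 : A 0 = 0)
    (hAlin : ∀ (c₁ c₂ : ℝ≥0∞), c₁ ≠ ⊤ → c₂ ≠ ⊤ → ∀ f₁ f₂ : E → ℝ≥0∞,
      A (fun i => c₁ * f₁ i + c₂ * f₂ i) = fun i => c₁ * A f₁ i + c₂ * A f₂ i)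
    (hAcont : ∀ f : ℕ → (E → ℝ≥0∞), Monotone f →
      Monotone (fun n => A (f n)) ∧
        A (fun i => ⨆ n, f n i) = fun i => ⨆ n, A (f n) i)
    (g : E → ℝ≥0∞) (fstar : E → ℝ≥0∞)
    (hfix : ∀ i, fstar i = A fstar i + g i)
    (hmin : ∀ f : E → ℝ≥0∞, (∀ i, f i = A f i + g i) → ∀ i, fstar i ≤ f i)
    (ft : E → ℝ≥0∞) (hsub : ∀ i, ft i ≤ A ft i + g i)
    (p : ℝ≥0∞) (hp : p ≠ ⊤) (hdom : ∀ i, ft i ≤ p * fstar i) :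
    ∀ i, ft i ≤ fstar i := by
  -- monotonicity of A
  have hmono : ∀ f h : E → ℝ≥0∞, (∀ i, f i ≤ h i) → ∀ i, A f i ≤ A h i := by
    intro f h hfh i
    have hseq : Monotone (fun n : ℕ => if n = 0 then f else h) := by
      intro a b hab
      by_cases ha : a = 0
      · by_cases hb : b = 0 <;> simp [ha, hb] <;> exact hfh
      · have hb : b ≠ 0 := by omega
        simp [ha, hb]
    have := (hAcont _ hseq).1 (Nat.zero_le 1)
    simpa using this i
  -- additivity
  have hadd : ∀ f h : E → ℝ≥0∞, A (fun i => f i + h i) = fun i => A f i + A h i := by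
    intro f h
    have := hAlin 1 1 ENNReal.one_ne_top ENNReal.one_ne_top f h
    simpa using this
  -- scalar multiplication
  have hsmul : ∀ f : E → ℝ≥0∞, A (fun i => p * f i) = fun i => p * A f i := by
    intro f
    have := hAlin p 0 hp ENNReal.zero_ne_top f 0
    simpa [hA0] using this
  -- the iteration sequence
  set S : ℕ → E → ℝ≥0∞ := fun n => Nat.rec 0 (fun _ s => fun i => A s i + g i) n with hS
  have hS0 : S 0 = 0 := rfl
  have hSsucc : ∀ n, S (n + 1) = fun i => A (S n) i + g i := fun n => rfl
  have hSmono : ∀ n i, S n i ≤ S (n + 1) i := by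
    intro n
    induction n with
    | zero => intro i; exact zero_le
    | succ n ih =>
      intro i
      simp only [hSsucc n, hSsucc (n + 1)]
      exact add_le_add_left (hmono _ _ ih i) _
  have hSMono : Monotone S := monotone_nat_of_le_succ fun n i => hSmono n i
  have hSMono' : ∀ i, Monotone fun n => S n i := fun i => monotone_nat_of_le_succ fun n => hSmono n i
  -- S n ≤ fstar
  have hSle : ∀ n i, S n i ≤ fstar i := by
    intro n
    induction n with
    | zero => intro i; exact zero_le
    | succ n ih =>
      intro i
      rw [hSsucc, hfix i]
      exact add_le_add_left (hmono _ _ ih i) _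
  -- sup of S is a fixed point
  have hSupfix : ∀ i, (⨆ n, S n i) = A (fun j => ⨆ n, S n j) i + g i := by
    intro i
    rw [(hAcont S hSMono).2]
    have h1 : (⨆ n, S n i) = ⨆ n, S (n + 1) i := by
      apply le_antisymm
      · exact iSup_le fun n => le_trans (hSmono n i) (le_iSup (fun m => S (m + 1) i) n)
      · exact iSup_le fun n => le_iSup (fun m => S m i) (n + 1)
    rw [h1]
    simp only [hSsucc]
    rw [ENNReal.iSup_add]
  -- fstar = sup S
  have hfeq : ∀ i, fstar i = ⨆ n, S n i := by
    intro i
    exact le_antisymm (hmin _ hSupfix i) (iSup_le fun n => hSle n i)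
  -- decomposition: fstar = A^[n] fstar + S n
  have hdecomp : ∀ n i, fstar i = A^[n] fstar i + S n i := by
    intro n
    induction n with
    | zero => intro i; simp [hS0]
    | succ n ih =>
      intro i
      rw [Function.iterate_succ' A n, hSsucc]
      calc fstar i = A fstar i + g i := hfix i
        _ = A (fun j => A^[n] fstar j + S n j) i + g i := by
            congr 1
            · congr 1
              funext j
              exact ih j
        _ = (A (A^[n] fstar) i + A (S n) i) + g i := by rw [hadd]
        _ = (A ∘ A^[n]) fstar i + (A (S n) i + g i) := by
            simp [Function.comp, add_assoc]
  -- subsolution bound: ft ≤ p * A^[n] fstar + S n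
  have hsubn : ∀ n i, ft i ≤ p * A^[n] fstar i + S n i := by
    intro n
    induction n with
    | zero => intro i; simpa [hS0] using hdom i
    | succ n ih =>
      intro i
      rw [Function.iterate_succ' A n, hSsucc]
      calc ft i ≤ A ft i + g i := hsub i
        _ ≤ A (fun j => p * A^[n] fstar j + S n j) i + g i :=
            add_le_add_left (hmono _ _ ih i) _
        _ = (A (fun j => p * A^[n] fstar j) i + A (S n) i) + g i := by rw [hadd]
        _ = (p * A (A^[n] fstar) i + A (S n) i) + g i := by rw [hsmul]
        _ = p * (A ∘ A^[n]) fstar i + (A (S n) i + g i) := by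
            simp [Function.comp, add_assoc]
  -- conclusion
  intro i
  by_cases htop : fstar i = ⊤
  · rw [htop]; exact le_top
  have hiter : ∀ n, A^[n] fstar i = fstar i - S n i := by
    intro n
    exact ENNReal.eq_sub_of_add_eq' htop (hdecomp n i).symm
  have hbound : ∀ n, ft i ≤ p * (fstar i - S n i) + fstar i := by
    intro n
    calc ft i ≤ p * A^[n] fstar i + S n i := hsubn n i
      _ = p * (fstar i - S n i) + S n i := by rw [hiter]
      _ ≤ p * (fstar i - S n i) + fstar i := add_le_add_right (hSle n i) _
  have hkey : ft i ≤ (⨅ n, p * (fstar i - S n i)) + fstar i := by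
    rw [ENNReal.iInf_add]
    exact le_iInf hbound
  have hinf0 : (⨅ n, p * (fstar i - S n i)) = 0 := by
    rw [← ENNReal.mul_iInf (fun h => (hp h).elim)]
    rw [← ENNReal.sub_iSup htop, ← hfeq i]
    simp
  rw [hinf0, zero_add] at hkey
  exact hkey
end
end

section
/- Let Q be an irreducible regular Q-matrix on E = ℤ≥0 with inf_{i} q_i > 0, whose embedding chain is recurrent and whose Q-process is ergodic; take H = {0} and set λ' := (1/2)·inf_i q_i. For λ ∈ (0, inf_i q_i) and an integer N ≥ 1, let (x_i^{(λ,N)})_{0≤i≤N} denote the minimal nonnegative solution of x_i = (q_i/(q_i−λ))·Σ_{1≤j≤N, j≠i} (q(i,j)/q_i)·x_j + 1/(q_i−λ) (0 ≤ i ≤ N). Then: (1) if the Q-process is not exponentially ergodic, then x_0^{(λ',N)} increases to ∞ as N → ∞; (2) if x_0^{(λ̃,N)} < ∞ for some λ̃ ∈ (0, inf_i q_i), then x_0^{(λ̂,N)} < ∞ for some λ̂ ∈ (λ̃, inf_i q_i); (3) for each fixed N, the map λ ↦ x_0^{(λ,N)} is continuous on (0, λ'] as a function with values in the extended reals (0,∞];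 (4) for each fixed N, lim_{λ↓0} x_0^{(λ,N)} ≤ 𝔼_0 σ_0 < ∞. -/
open scoped ENNReal NNReal BigOperators Classical Topology
open Filter Set

noncomputable section

namespace MinSolAux
variable {ι : Type*}

lemma tsum_mul_iSup_mono (A : ι → ℝ≥0∞) (u : ℕ → ι → ℝ≥0∞)
    (hu : ∀ j, Monotone fun n => u n j) :
    (∑' j, A j * ⨆ n, u n j) = ⨆ n, ∑' j, A j * u n j := by
  rw [show (∑' j, A j * ⨆ n, u n j) = ∑' j, ⨆ n, A j * u n j from
    tsum_congr fun j => ENNReal.mul_iSup _ _]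
  rw [ENNReal.tsum_eq_iSup_sum]
  rw [show (⨆ n, ∑' j, A j * u n j) = ⨆ n, ⨆ s : Finset ι, ∑ j ∈ s, A j * u n j from
    iSup_congr fun n => ENNReal.tsum_eq_iSup_sum]
  rw [iSup_comm]
  refine iSup_congr fun s => ?_
  exact ENNReal.finsetSum_iSup_of_monotone fun j a b hab =>
    mul_le_mul_right (hu j hab) _

def solIter (A : ι → ι → ℝ≥0∞) (g : ι → ℝ≥0∞) : ℕ → ι → ℝ≥0∞
  | 0 => fun _ => 0
  | n + 1 => fun i => (∑' j, A i j * solIter A g n j) + g i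

lemma solIter_mono (A : ι → ι → ℝ≥0∞) (g : ι → ℝ≥0∞) (j : ι) :
    Monotone fun n => solIter A g n j := by
  refine monotone_nat_of_le_succ ?_
  intro n
  induction n generalizing j with
  | zero => exact zero_le
  | succ m ih =>
    show solIter A g (m+1) j ≤ solIter A g (m+2) j
    exact add_le_add_left (ENNReal.tsum_le_tsum fun k => mul_le_mul_right (ih k) _) _

lemma solIter_le_sol (A : ι → ι → ℝ≥0∞) (g : ι → ℝ≥0∞) (y : ι → ℝ≥0∞)
    (hy : ∀ i, (∑' j, A i j * y j) + g i ≤ y i) (n : ℕ) (i : ι) :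
    solIter A g n i ≤ y i := by
  induction n generalizing i with
  | zero => exact zero_le
  | succ m ih =>
    refine le_trans ?_ (hy i)
    exact add_le_add_left (ENNReal.tsum_le_tsum fun k => mul_le_mul_right (ih k) _) _

lemma isMinSol_solIter (A : ι → ι → ℝ≥0∞) (g : ι → ℝ≥0∞) :
    IsMinSol A g (fun i => ⨆ n, solIter A g n i) := by
  constructor
  · intro i
    show (⨆ n, solIter A g n i) = (∑' j, A i j * ⨆ n, solIter A g n j) + g i
    rw [tsum_mul_iSup_mono (A i) _ (solIter_mono A g), ENNReal.iSup_add]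
    apply le_antisymm
    · refine iSup_le fun n => ?_
      calc solIter A g n i ≤ solIter A g (n+1) i := solIter_mono A g i (Nat.le_succ n)
        _ = (∑' j, A i j * solIter A g n j) + g i := rfl
        _ ≤ _ := le_iSup (fun n => (∑' j, A i j * solIter A g n j) + g i) n
    · exact iSup_le fun n => le_iSup (fun n : ℕ => solIter A g n i) (n+1)
  · intro y hy i
    exact iSup_le fun n => solIter_le_sol A g y (fun i => le_of_eq (hy i).symm) n i

lemma exists_isMinSol (A : ι → ι → ℝ≥0∞) (g : ι → ℝ≥0∞) : ∃ x, IsMinSol A g x :=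
  ⟨_, isMinSol_solIter A g⟩

lemma IsMinSol.le_supersol {A : ι → ι → ℝ≥0∞} {g x : ι → ℝ≥0∞}
    (hx : IsMinSol A g x) {y : ι → ℝ≥0∞}
    (hy : ∀ i, (∑' j, A i j * y j) + g i ≤ y i) (i : ι) : x i ≤ y i := by
  have h1 := hx.2 _ (isMinSol_solIter A g).1 i
  exact h1.trans (iSup_le fun n => solIter_le_sol A g y hy n i)

lemma IsMinSol.eq_iSup_solIter {A : ι → ι → ℝ≥0∞} {g x : ι → ℝ≥0∞}
    (hx : IsMinSol A g x) (i : ι) : x i = ⨆ n, solIter A g n i := by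
  refine le_antisymm (hx.2 _ (isMinSol_solIter A g).1 i) ?_
  exact iSup_le fun n => solIter_le_sol A g x (fun k => le_of_eq (hx.1 k).symm) n i

end MinSolAux
namespace QAux
variable (q : ℕ → ℕ → ℝ)

/-- truncated coefficient matrix -/
def AN (lam : ℝ) (N : ℕ) : Fin (N+1) → Fin (N+1) → ℝ≥0∞ :=
  fun i j => if (j : ℕ) = 0 then 0 else
    ENNReal.ofReal ((-q (i:ℕ) (i:ℕ)) / (-q (i:ℕ) (i:ℕ) - lam)) * embed q (i:ℕ) (j:ℕ)

/-- truncated inhomogeneity -/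
def gN (lam : ℝ) (N : ℕ) : Fin (N+1) → ℝ≥0∞ :=
  fun i => ENNReal.ofReal (1 / (-q (i:ℕ) (i:ℕ) - lam))

variable {q}

lemma qpos (hq : IsQMatrix q) (hQ : 0 < ⨅ i, -q i i) (i : ℕ) :
    (⨅ i, -q i i) ≤ -q i i :=
  ciInf_le ⟨0, fun x hx => by obtain ⟨j, rfl⟩ := hx; exact (hq.diag_neg j).le⟩ i

lemma key_ratio {Q qi a l : ℝ} (hqi : Q ≤ qi) (hal : a ≤ l) :
    (Q - l) * (qi - a) ≤ (Q - a) * (qi - l) := by nlinarith [mul_nonneg (sub_nonneg.2 hqi) (sub_nonneg.2 hal)]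

lemma c_ratio {Q qi a l : ℝ} (hQ : 0 < Q) (hqi : Q ≤ qi) (ha : 0 < a) (hal : a ≤ l)
    (hl : l < Q) : qi / (qi - l) ≤ ((Q - a)/(Q - l)) * (qi / (qi - a)) := by
  have h1 : 0 < qi - l := by linarith
  have h2 : 0 < qi - a := by linarith
  have h3 : 0 < Q - l := by linarith
  have h4 : 0 < qi := by linarith
  rw [div_mul_div_comm, div_le_div_iff₀ h1 (by positivity)]
  nlinarith [key_ratio hqi hal, h4]

lemma g_ratio {Q qi a l : ℝ} (hQ : 0 < Q) (hqi : Q ≤ qi) (ha : 0 < a) (hal : a ≤ l)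
    (hl : l < Q) : 1 / (qi - l) ≤ ((Q - a)/(Q - l)) * (1 / (qi - a)) := by
  have h1 : 0 < qi - l := by linarith
  have h2 : 0 < qi - a := by linarith
  have h3 : 0 < Q - l := by linarith
  rw [div_mul_div_comm, div_le_div_iff₀ h1 (by positivity)]
  nlinarith [key_ratio hqi hal]

lemma AN_ratio_le (hq : IsQMatrix q) (hQ : 0 < ⨅ i, -q i i) {N : ℕ} {a l : ℝ}
    (ha : 0 < a) (hal : a ≤ l) (hl : l < ⨅ i, -q i i) (i j : Fin (N+1)) :
    AN q l N i j ≤ ENNReal.ofReal (((⨅ i, -q i i) - a)/((⨅ i, -q i i) - l)) * AN q a N i j := by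
  set Q := ⨅ i, -q i i
  unfold AN
  split_ifs with h
  · simp
  · rw [← mul_assoc, ← ENNReal.ofReal_mul (div_nonneg (by linarith : (0:ℝ) ≤ (⨅ i, -q i i) - a) (by linarith : (0:ℝ) ≤ (⨅ i, -q i i) - l))]
    exact mul_le_mul_left (ENNReal.ofReal_le_ofReal
        (c_ratio hQ (qpos hq hQ i) ha hal hl)) _

lemma gN_ratio_le (hq : IsQMatrix q) (hQ : 0 < ⨅ i, -q i i) {N : ℕ} {a l : ℝ}
    (ha : 0 < a) (hal : a ≤ l) (hl : l < ⨅ i, -q i i) (i : Fin (N+1)) :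
    gN q l N i ≤ ENNReal.ofReal (((⨅ i, -q i i) - a)/((⨅ i, -q i i) - l)) * gN q a N i := by
  unfold gN
  rw [← ENNReal.ofReal_mul (div_nonneg (by linarith) (by linarith))]
  exact ENNReal.ofReal_le_ofReal (g_ratio hQ (qpos hq hQ i) ha hal hl)

lemma AN_mono_lam (hq : IsQMatrix q) (hQ : 0 < ⨅ i, -q i i) {N : ℕ} {a b : ℝ}
    (ha : 0 < a) (hab : a ≤ b) (hb : b < ⨅ i, -q i i) (i j : Fin (N+1)) :
    AN q a N i j ≤ AN q b N i j := by
  have h1 := qpos hq hQ (i : ℕ)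
  unfold AN
  split_ifs with h
  · exact le_rfl
  · refine mul_le_mul_left (ENNReal.ofReal_le_ofReal ?_) _
    have h2 : 0 < -q (i:ℕ) (i:ℕ) - b := by linarith
    have h3 : 0 < -q (i:ℕ) (i:ℕ) - a := by linarith
    exact div_le_div_of_nonneg_left (by linarith) h2 (by linarith)

lemma gN_mono_lam (hq : IsQMatrix q) (hQ : 0 < ⨅ i, -q i i) {N : ℕ} {a b : ℝ}
    (ha : 0 < a) (hab : a ≤ b) (hb : b < ⨅ i, -q i i) (i : Fin (N+1)) :
    gN q a N i ≤ gN q b N i := by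
  have h1 := qpos hq hQ (i : ℕ)
  refine ENNReal.ofReal_le_ofReal ?_
  have h2 : 0 < -q (i:ℕ) (i:ℕ) - b := by linarith
  exact div_le_div_of_nonneg_left (by linarith) h2 (by linarith)


open MinSolAux

lemma supbound (hq : IsQMatrix q) (hQ : 0 < ⨅ i, -q i i) {N : ℕ} {a θ : ℝ}
    (ha : a ∈ Set.Ioo 0 (⨅ i, -q i i)) (hθ : 1 < θ)
    {xa : Fin (N+1) → ℝ≥0∞} (hxa : IsMinSol (AN q a N) (gN q a N) xa) :
    ∃ ε > 0, ∀ l, a < l → l < a + ε → l < (⨅ i, -q i i) ∧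
      ∀ y : Fin (N+1) → ℝ≥0∞, IsMinSol (AN q l N) (gN q l N) y →
        ∀ i, y i ≤ ENNReal.ofReal θ * xa i := by
  classical
  set Q := ⨅ i, -q i i with hQdef
  obtain ⟨haQ, haQ'⟩ := ha
  obtain ⟨M, hMdef⟩ : ∃ M : ℝ, M = ∑ i : Fin (N+1), (xa i).toReal := ⟨_, rfl⟩
  have hM : ∀ i : Fin (N+1), (xa i).toReal ≤ M :=
    fun i => hMdef ▸ Finset.single_le_sum (fun _ _ => ENNReal.toReal_nonneg) (Finset.mem_univ i)
  have hM0 : 0 ≤ M := hMdef ▸ Finset.sum_nonneg fun _ _ => ENNReal.toReal_nonneg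
  obtain ⟨qm, hqmdef⟩ : ∃ t : ℝ, t = (∑ i : Fin (N+1), (-q (i:ℕ) (i:ℕ))) + 1 := ⟨_, rfl⟩
  have hqm : ∀ i : Fin (N+1), -q (i:ℕ) (i:ℕ) ≤ qm := by
    intro i
    have h := Finset.single_le_sum (f := fun i : Fin (N+1) => -q (i:ℕ) (i:ℕ))
      (fun j _ => (hq.diag_neg (j:ℕ)).le) (Finset.mem_univ i)
    have h2 : -q (i:ℕ) (i:ℕ) ≤ ∑ x : Fin (N+1), -q (x:ℕ) (x:ℕ) := h
    simp only [hqmdef]; linarith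
  obtain ⟨δ, hδdef⟩ : ∃ t : ℝ, t = 1 / (qm - a) := ⟨_, rfl⟩
  have hqma : 0 < qm - a := by
    have h1 := qpos hq hQ ((0 : Fin (N+1)) : ℕ)
    have h0 := hqm 0
    linarith
  have hδpos : 0 < δ := hδdef ▸ one_div_pos.mpr hqma
  have hδle : ∀ i : Fin (N+1), δ ≤ 1 / (-q (i:ℕ) (i:ℕ) - a) := by
    intro i
    have h1 : 0 < -q (i:ℕ) (i:ℕ) - a := by have := qpos hq hQ (i:ℕ); linarith
    rw [hδdef]
    exact one_div_le_one_div_of_le h1 (by have := hqm i; linarith)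
  obtain ⟨r₀, hr₀def⟩ : ∃ t : ℝ, t = 1 + (θ - 1) * δ / (θ * (M + 1)) := ⟨_, rfl⟩
  have hθ0 : (0:ℝ) < θ := by linarith
  have hr₀ : 1 < r₀ := by
    have h : 0 < (θ - 1) * δ / (θ * (M + 1)) :=
      div_pos (mul_pos (by linarith) hδpos) (by positivity)
    rw [hr₀def]; linarith
  have hr₀pos : 0 < r₀ := by linarith
  refine ⟨(Q - a) * (1 - 1/r₀), by
    have h1 : 1/r₀ < 1 := by rw [div_lt_one hr₀pos]; linarith
    have h2 : 0 < Q - a := by linarith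
    exact mul_pos h2 (by linarith), ?_⟩
  intro l hl1 hl2
  have h1r₀ : 1/r₀ < 1 := by rw [div_lt_one hr₀pos]; linarith
  have hinv : r₀ * (1/r₀) = 1 := mul_one_div_cancel (by linarith)
  have hexp : (Q - a) * (1 - 1/r₀) = (Q - a) - (Q - a) * (1/r₀) := by ring
  have hrinv : 0 < 1/r₀ := by positivity
  have hQa : 0 < Q - a := by linarith
  have hlQ : l < Q := by nlinarith [mul_pos hQa hrinv]
  refine ⟨hlQ, ?_⟩
  obtain ⟨r, hrdef⟩ : ∃ t : ℝ, t = (Q - a)/(Q - l) := ⟨_, rfl⟩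
  have hQl : 0 < Q - l := by linarith
  have hr1 : 1 ≤ r := by rw [hrdef, le_div_iff₀ hQl]; linarith
  have hrr₀ : r ≤ r₀ := by
    rw [hrdef, div_le_iff₀ hQl]
    have h5 : (Q - a) * (1/r₀) < Q - l := by linarith
    have h6 := mul_lt_mul_of_pos_left h5 hr₀pos
    have h7 : r₀ * ((Q - a) * (1/r₀)) = Q - a := by
      field_simp
    exact (h7 ▸ h6).le
  intro y hy
  refine IsMinSol.le_supersol hy ?_
  intro i
  show (∑' j, AN q l N i j * (ENNReal.ofReal θ * xa j)) + gN q l N i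
      ≤ ENNReal.ofReal θ * xa i
  by_cases hfin : xa i = ⊤
  · rw [hfin, ENNReal.mul_top (by simp [ENNReal.ofReal_eq_zero]; linarith)]
    exact le_top
  · -- finite case
    obtain ⟨S, hSdef⟩ : ∃ t : ℝ≥0∞, t = ∑' j, AN q a N i j * xa j := ⟨_, rfl⟩
    have hSg : S + gN q a N i = xa i := by rw [hSdef]; exact (hxa.1 i).symm
    have hS_ne : S ≠ ⊤ := by
      intro h
      exact hfin (by rw [← hSg, h, top_add])
    obtain ⟨s, hsdef⟩ : ∃ t : ℝ, t = S.toReal := ⟨_, rfl⟩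
    have hs0 : 0 ≤ s := hsdef ▸ ENNReal.toReal_nonneg
    obtain ⟨G, hGdef⟩ : ∃ t : ℝ, t = 1 / (-q (i:ℕ) (i:ℕ) - a) := ⟨_, rfl⟩
    have hqia : 0 < -q (i:ℕ) (i:ℕ) - a := by have := qpos hq hQ (i:ℕ); linarith
    have hGpos : 0 < G := by rw [hGdef]; positivity
    have hgval : gN q a N i = ENNReal.ofReal G := by rw [hGdef]; rfl
    have hSval : S = ENNReal.ofReal s := by rw [hsdef]; exact (ENNReal.ofReal_toReal hS_ne).symm
    have hXval : xa i = ENNReal.ofReal (s + G) := by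
      rw [← hSg, hSval, hgval, ENNReal.ofReal_add hs0 hGpos.le]
    have hsGM : s + G ≤ M := by
      have := hM i
      rw [hXval, ENNReal.toReal_ofReal (by linarith)] at this
      exact this
    -- the real inequality
    have hreal : r * (θ * s + G) ≤ θ * (s + G) := by
      have hδG : δ ≤ G := by rw [hGdef]; exact hδle i
      have hA : θ * s + G ≤ θ * M := by nlinarith
      have hB : (r - 1) * (θ * s + G) ≤ (r - 1) * (θ * M) :=
        mul_le_mul_of_nonneg_left hA (by linarith)
      have hC : (r - 1) * (θ * M) ≤ ((θ - 1) * δ / (θ * (M + 1))) * (θ * M) := by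
        refine mul_le_mul_of_nonneg_right ?_ (by positivity)
        linarith
      have hD : ((θ - 1) * δ / (θ * (M + 1))) * (θ * M) ≤ (θ - 1) * δ := by
        rw [div_mul_eq_mul_div, div_le_iff₀ (by positivity)]
        nlinarith [mul_pos (mul_pos (sub_pos.2 hθ) hδpos) hθ0]
      have h6 : (r - 1) * (θ * s + G) ≤ (θ - 1) * G := by
        have h8 := mul_le_mul_of_nonneg_left hδG (by linarith : (0:ℝ) ≤ θ - 1)
        linarith [hB, hC, hD, h8]
      linarith [h6]
    -- the ENNReal chain
    calc (∑' j, AN q l N i j * (ENNReal.ofReal θ * xa j)) + gN q l N i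
        = ENNReal.ofReal θ * (∑' j, AN q l N i j * xa j) + gN q l N i := by
          rw [← ENNReal.tsum_mul_left]
          congr 1
          exact tsum_congr fun j => by ring
      _ ≤ ENNReal.ofReal θ * (∑' j, (ENNReal.ofReal r * AN q a N i j) * xa j)
            + ENNReal.ofReal r * gN q a N i := by
          rw [hrdef]
          refine add_le_add (mul_le_mul_right (ENNReal.tsum_le_tsum fun j =>
            mul_le_mul_left (AN_ratio_le hq hQ haQ hl1.le hlQ i j) _) _)
            (gN_ratio_le hq hQ haQ hl1.le hlQ i)
      _ = ENNReal.ofReal r * (ENNReal.ofReal θ * S + gN q a N i) := by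
          have hpull : (∑' j, (ENNReal.ofReal r * AN q a N i j) * xa j)
              = ENNReal.ofReal r * S := by
            rw [hSdef, ← ENNReal.tsum_mul_left]
            exact tsum_congr fun j => mul_assoc _ _ _
          rw [hpull]; ring
      _ = ENNReal.ofReal (r * (θ * s + G)) := by
          rw [hSval, hgval, ← ENNReal.ofReal_mul (by linarith : (0:ℝ) ≤ θ),
            ← ENNReal.ofReal_add (mul_nonneg (by linarith) hs0) hGpos.le,
            ← ENNReal.ofReal_mul (by linarith : (0:ℝ) ≤ r)]
      _ ≤ ENNReal.ofReal (θ * (s + G)) := ENNReal.ofReal_le_ofReal hreal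
      _ = ENNReal.ofReal θ * xa i := by
          rw [hXval, ← ENNReal.ofReal_mul (by linarith : (0:ℝ) ≤ θ)]


lemma minsol_mono_lam (hq : IsQMatrix q) (hQ : 0 < ⨅ i, -q i i) {N : ℕ} {a b : ℝ}
    (ha : 0 < a) (hab : a ≤ b) (hb : b < ⨅ i, -q i i)
    {xa xb : Fin (N+1) → ℝ≥0∞} (hxa : IsMinSol (AN q a N) (gN q a N) xa)
    (hxb : IsMinSol (AN q b N) (gN q b N) xb) (i : Fin (N+1)) : xa i ≤ xb i := by
  refine IsMinSol.le_supersol hxa (fun i => ?_) i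
  calc (∑' j, AN q a N i j * xb j) + gN q a N i
      ≤ (∑' j, AN q b N i j * xb j) + gN q b N i :=
        add_le_add (ENNReal.tsum_le_tsum fun j =>
          mul_le_mul_left (AN_mono_lam hq hQ ha hab hb i j) _)
          (gN_mono_lam hq hQ ha hab hb i)
    _ = xb i := (hxb.1 i).symm

lemma minsol_mono_N {lam : ℝ} {N₁ N₂ : ℕ} (hN : N₁ ≤ N₂)
    {x₁ : Fin (N₁+1) → ℝ≥0∞} {x₂ : Fin (N₂+1) → ℝ≥0∞}
    (hx₁ : IsMinSol (AN q lam N₁) (gN q lam N₁) x₁)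
    (hx₂ : IsMinSol (AN q lam N₂) (gN q lam N₂) x₂) (i : Fin (N₁+1)) :
    x₁ i ≤ x₂ (Fin.castLE (by omega) i) := by
  refine IsMinSol.le_supersol hx₁
    (y := fun k => x₂ (Fin.castLE (by omega : N₁ + 1 ≤ N₂ + 1) k)) (fun i => ?_) i
  have h2 := (hx₂.1 (Fin.castLE (by omega : N₁ + 1 ≤ N₂ + 1) i)).symm
  calc (∑' j : Fin (N₁+1), AN q lam N₁ i j * x₂ (Fin.castLE (by omega) j))
        + gN q lam N₁ i
      ≤ (∑' j : Fin (N₂+1), AN q lam N₂ (Fin.castLE (by omega) i) j * x₂ j)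
        + gN q lam N₂ (Fin.castLE (by omega) i) := by
        refine add_le_add ?_ le_rfl
        exact ENNReal.tsum_comp_le_tsum_of_injective (Fin.castLE_injective _)
          (fun j => AN q lam N₂ (Fin.castLE (by omega) i) j * x₂ j)
    _ = x₂ (Fin.castLE (by omega) i) := h2

lemma minsol_le_ES (hq : IsQMatrix q) (hQ : 0 < ⨅ i, -q i i) {N : ℕ} (ES : ℕ → ℝ≥0∞)
    (hES : IsMinSol (fun i j => if j = 0 then 0 else embed q i j)
      (fun i => (ENNReal.ofReal (-q i i))⁻¹) ES)
    (hESfin : ∀ i, ES i ≠ ⊤) {θ lam : ℝ} (hθ : 1 < θ)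
    (hlam0 : 0 < lam) (hlamQ : lam < ⨅ i, -q i i)
    (hlamθ : lam ≤ (θ - 1)/(θ * ((∑ j : Fin (N+1), (ES (j:ℕ)).toReal) + 1)))
    {y : Fin (N+1) → ℝ≥0∞} (hy : IsMinSol (AN q lam N) (gN q lam N) y) (i : Fin (N+1)) :
    y i ≤ ENNReal.ofReal θ * ES (i:ℕ) := by
  have hθ0 : (0:ℝ) < θ := by linarith
  obtain ⟨M, hMdef⟩ : ∃ t : ℝ, t = ∑ j : Fin (N+1), (ES (j:ℕ)).toReal := ⟨_, rfl⟩
  have hM0 : 0 ≤ M := hMdef ▸ Finset.sum_nonneg fun _ _ => ENNReal.toReal_nonneg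
  rw [← hMdef] at hlamθ
  refine IsMinSol.le_supersol hy (y := fun k => ENNReal.ofReal θ * ES (k:ℕ)) (fun i => ?_) i
  have hqi := qpos hq hQ (i:ℕ)
  have hqipos : (0:ℝ) < -q (i:ℕ) (i:ℕ) := hq.diag_neg _
  have hu : (0:ℝ) < -q (i:ℕ) (i:ℕ) - lam := by linarith
  obtain ⟨S, hSdef⟩ : ∃ t : ℝ≥0∞,
      t = ∑' j : ℕ, (if j = 0 then 0 else embed q (i:ℕ) j) * ES j := ⟨_, rfl⟩
  have hSg : S + (ENNReal.ofReal (-q (i:ℕ) (i:ℕ)))⁻¹ = ES (i:ℕ) := by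
    rw [hSdef]; exact (hES.1 (i:ℕ)).symm
  have hS_ne : S ≠ ⊤ := by
    intro h
    exact hESfin (i:ℕ) (by rw [← hSg, h, top_add])
  obtain ⟨s, hsdef⟩ : ∃ t : ℝ, t = S.toReal := ⟨_, rfl⟩
  have hs0 : 0 ≤ s := hsdef ▸ ENNReal.toReal_nonneg
  have hSval : S = ENNReal.ofReal s := by
    rw [hsdef]; exact (ENNReal.ofReal_toReal hS_ne).symm
  have hinvval : (ENNReal.ofReal (-q (i:ℕ) (i:ℕ)))⁻¹ = ENNReal.ofReal (1/(-q (i:ℕ) (i:ℕ))) := by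
    rw [one_div, ENNReal.ofReal_inv_of_pos hqipos]
  have hEval : ES (i:ℕ) = ENNReal.ofReal (s + 1/(-q (i:ℕ) (i:ℕ))) := by
    rw [← hSg, hSval, hinvval, ENNReal.ofReal_add hs0 (by positivity)]
  obtain ⟨E, hEdef⟩ : ∃ t : ℝ, t = s + 1/(-q (i:ℕ) (i:ℕ)) := ⟨_, rfl⟩
  have hEM : E ≤ M := by
    have h := hMdef ▸ Finset.single_le_sum
      (f := fun j : Fin (N+1) => (ES (j:ℕ)).toReal)
      (fun _ _ => ENNReal.toReal_nonneg) (Finset.mem_univ i)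
    rw [hEval, ENNReal.toReal_ofReal (by rw [← hEdef]; rw [hEdef]; positivity)] at h
    rw [hEdef]; exact h
  have hE0 : 0 ≤ E := by rw [hEdef]; positivity
  -- the real inequality
  have hreal : θ * ((-q (i:ℕ) (i:ℕ)) / (-q (i:ℕ) (i:ℕ) - lam)) * s + 1/(-q (i:ℕ) (i:ℕ) - lam)
      ≤ θ * E := by
    have h1 : lam * (θ * (M+1)) ≤ θ - 1 := (le_div_iff₀ (by positivity)).mp hlamθ
    have h2 : θ * lam * E ≤ θ - 1 := by nlinarith
    have hne : -q (i:ℕ) (i:ℕ) ≠ 0 := ne_of_gt hqipos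
    have h3 : E * (-q (i:ℕ) (i:ℕ)) = s * (-q (i:ℕ) (i:ℕ)) + 1 := by
      rw [hEdef, add_mul, one_div_mul_cancel hne]
    have h4 : θ * E * (-q (i:ℕ) (i:ℕ) - lam)
        = θ * (s * (-q (i:ℕ) (i:ℕ))) + θ - θ * (E * lam) := by
      linear_combination θ * h3
    have key : θ * ((-q (i:ℕ) (i:ℕ)) / (-q (i:ℕ) (i:ℕ) - lam)) * s + 1/(-q (i:ℕ) (i:ℕ) - lam)
        = (θ * (-q (i:ℕ) (i:ℕ)) * s + 1)/(-q (i:ℕ) (i:ℕ) - lam) := by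
      field_simp
    rw [key, div_le_iff₀ hu]
    nlinarith [h2, h4]
  -- the ENNReal chain
  calc (∑' j : Fin (N+1), AN q lam N i j * (ENNReal.ofReal θ * ES (j:ℕ))) + gN q lam N i
      = ENNReal.ofReal θ * (∑' j : Fin (N+1), AN q lam N i j * ES (j:ℕ)) + gN q lam N i := by
        rw [← ENNReal.tsum_mul_left]
        congr 1
        exact tsum_congr fun j => by ring
    _ ≤ ENNReal.ofReal θ * (ENNReal.ofReal ((-q (i:ℕ) (i:ℕ)) / (-q (i:ℕ) (i:ℕ) - lam)) * S)
          + gN q lam N i := by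
        refine add_le_add (mul_le_mul_right ?_ _) le_rfl
        have hAN : ∀ j : Fin (N+1), AN q lam N i j * ES (j:ℕ)
            = ENNReal.ofReal ((-q (i:ℕ) (i:ℕ)) / (-q (i:ℕ) (i:ℕ) - lam)) *
              ((if (j:ℕ) = 0 then 0 else embed q (i:ℕ) (j:ℕ)) * ES (j:ℕ)) := by
          intro j
          unfold AN
          split_ifs with h
          · simp
          · ring
        calc (∑' j : Fin (N+1), AN q lam N i j * ES (j:ℕ))
            = ENNReal.ofReal ((-q (i:ℕ) (i:ℕ)) / (-q (i:ℕ) (i:ℕ) - lam)) *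
              ∑' j : Fin (N+1), (if (j:ℕ) = 0 then 0 else embed q (i:ℕ) (j:ℕ)) * ES (j:ℕ) := by
              rw [← ENNReal.tsum_mul_left]; exact tsum_congr hAN
          _ ≤ _ := by
              refine mul_le_mul_right ?_ _
              rw [hSdef]
              exact ENNReal.tsum_comp_le_tsum_of_injective Fin.val_injective
                (fun j => (if j = 0 then 0 else embed q (i:ℕ) j) * ES j)
    _ = ENNReal.ofReal (θ * ((-q (i:ℕ) (i:ℕ)) / (-q (i:ℕ) (i:ℕ) - lam)) * s
          + 1/(-q (i:ℕ) (i:ℕ) - lam)) := by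
        rw [hSval, gN]
        rw [← ENNReal.ofReal_mul (by positivity), ← ENNReal.ofReal_mul (by positivity),
          ← ENNReal.ofReal_add (by positivity) (by positivity)]
        ring_nf
    _ ≤ ENNReal.ofReal (θ * E) := ENNReal.ofReal_le_ofReal hreal
    _ = ENNReal.ofReal θ * ES (i:ℕ) := by
        rw [hEval, ← hEdef, ← ENNReal.ofReal_mul (by positivity)]


/-- full coefficient matrix -/
def Afull (q : ℕ → ℕ → ℝ) (lam : ℝ) : ℕ → ℕ → ℝ≥0∞ := fun i j => if j = 0 then 0 else
  ENNReal.ofReal ((-q i i) / (-q i i - lam)) * embed q i j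

/-- full inhomogeneity -/
def gfull (q : ℕ → ℕ → ℝ) (lam : ℝ) : ℕ → ℝ≥0∞ := fun i => ENNReal.ofReal (1 / (-q i i - lam))

/-- extension of the truncated solutions to ℕ -/
def xE (q : ℕ → ℕ → ℝ) (xN : ∀ N : ℕ, Fin (N+1) → ℝ≥0∞) (N j : ℕ) : ℝ≥0∞ :=
  if h : j ≤ N ∧ 1 ≤ N then xN N ⟨j, by omega⟩ else 0

lemma xE_mono {lam : ℝ} (xN : ∀ N : ℕ, Fin (N+1) → ℝ≥0∞)
    (hxN : ∀ N, 1 ≤ N → IsMinSol (AN q lam N) (gN q lam N) (xN N)) (j : ℕ) :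
    Monotone (fun N => xE q xN N j) := by
  intro N₁ N₂ h12
  simp only [xE]
  split_ifs with h1 h2
  · exact minsol_mono_N h12 (hxN N₁ h1.2) (hxN N₂ (h1.2.trans h12)) ⟨j, by omega⟩
  · exact absurd ⟨h1.1.trans h12, h1.2.trans h12⟩ h2
  · exact zero_le
  · exact zero_le

lemma full_sol (hq : IsQMatrix q) (hQ : 0 < ⨅ i, -q i i) {lam : ℝ}
    (hlam : lam ∈ Set.Ioo (0:ℝ) (⨅ i, -q i i))
    (xN : ∀ N : ℕ, Fin (N+1) → ℝ≥0∞)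
    (hxN : ∀ N, 1 ≤ N → IsMinSol (AN q lam N) (gN q lam N) (xN N)) (i : ℕ) :
    (⨆ N, xE q xN N i) = (∑' j, Afull q lam i j * ⨆ N, xE q xN N j) + gfull q lam i := by
  rw [MinSolAux.tsum_mul_iSup_mono _ _ (fun j => xE_mono xN hxN j), ENNReal.iSup_add]
  have hTmono : Monotone (fun N => (∑' j : ℕ, Afull q lam i j * xE q xN N j) + gfull q lam i) :=
    fun N₁ N₂ h12 => add_le_add_left (ENNReal.tsum_le_tsum fun j =>
      mul_le_mul_right (xE_mono xN hxN j h12) _) _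
  have hTeq : ∀ N, i ≤ N → 1 ≤ N →
      (∑' j : ℕ, Afull q lam i j * xE q xN N j) + gfull q lam i = xE q xN N i := by
    intro N hiN h1N
    have hxEi : xE q xN N i = xN N ⟨i, by omega⟩ := by
      simp only [xE]; rw [dif_pos ⟨hiN, h1N⟩]
    have heq := (hxN N h1N).1 ⟨i, by omega⟩
    rw [hxEi, heq]
    congr 1
    have hzero : ∀ j : ℕ, j ∉ Finset.range (N+1) → Afull q lam i j * xE q xN N j = 0 := by
      intro j hj
      rw [Finset.mem_range, not_lt] at hj
      have : xE q xN N j = 0 := by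
        simp only [xE]; rw [dif_neg]; rintro ⟨h, -⟩; omega
      rw [this, mul_zero]
    rw [tsum_eq_sum hzero, ← Fin.sum_univ_eq_sum_range
      (fun j => Afull q lam i j * xE q xN N j) (N+1), tsum_fintype]
    refine Finset.sum_congr rfl fun j _ => ?_
    have hxEj : xE q xN N (j:ℕ) = xN N j := by
      simp only [xE]; rw [dif_pos ⟨by omega, h1N⟩]
    rw [hxEj]
    rfl
  apply le_antisymm
  · refine iSup_le fun N => ?_
    calc xE q xN N i ≤ xE q xN (max N (max i 1)) i :=
          xE_mono xN hxN i (le_max_left _ _)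
      _ = _ := (hTeq _ (le_trans (le_max_left i 1) (le_max_right N _))
          (le_trans (le_max_right i 1) (le_max_right N _))).symm
      _ ≤ _ := le_iSup (fun N => (∑' j : ℕ, Afull q lam i j * xE q xN N j) + gfull q lam i) _
  · refine iSup_le fun N => ?_
    calc (∑' j : ℕ, Afull q lam i j * xE q xN N j) + gfull q lam i
        ≤ (∑' j : ℕ, Afull q lam i j * xE q xN (max N (max i 1)) j) + gfull q lam i :=
          hTmono (le_max_left _ _)
      _ = xE q xN (max N (max i 1)) i := hTeq _ (le_trans (le_max_left i 1) (le_max_right N _))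
          (le_trans (le_max_right i 1) (le_max_right N _))
      _ ≤ _ := le_iSup (fun N => xE q xN N i) _

lemma finprop (hq : IsQMatrix q) (hQ : 0 < ⨅ i, -q i i) {lam : ℝ}
    (hlam : lam ∈ Set.Ioo (0:ℝ) (⨅ i, -q i i))
    (hirr : ∀ i j : ℕ, i ≠ j → Relation.TransGen (fun a b => 0 < q a b) i j)
    {m : ℕ → ℝ≥0∞} (hm : ∀ i, m i = (∑' j, Afull q lam i j * m j) + gfull q lam i)
    (h0 : m 0 ≠ ⊤) : ∀ i, m i ≠ ⊤ := by
  have step : ∀ a c : ℕ, 0 < q a c → m a ≠ ⊤ → m c ≠ ⊤ := by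
    intro a c hac hma
    by_cases hc : c = 0
    · rw [hc]; exact h0
    have hca : c ≠ a := by
      intro h; rw [h] at hac; have := hq.diag_neg a; linarith
    have hqa : 0 < -q a a := hq.diag_neg a
    have hqalam : 0 < -q a a - lam := by have := qpos hq hQ a; have := hlam.2; linarith
    have hAc : Afull q lam a c ≠ 0 := by
      unfold Afull embed
      rw [if_neg hc, if_neg hca]
      refine mul_ne_zero ?_ ?_ <;>
        simp only [ne_eq, ENNReal.ofReal_eq_zero, not_le] <;> positivity
    intro hmc
    apply hma
    rw [hm a, ENNReal.add_eq_top]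
    left
    refine eq_top_iff.mpr ?_
    calc (⊤:ℝ≥0∞) = Afull q lam a c * m c := by rw [hmc, ENNReal.mul_top hAc]
      _ ≤ _ := ENNReal.le_tsum c
  have main : ∀ i, Relation.TransGen (fun a b => 0 < q a b) 0 i → m i ≠ ⊤ := by
    intro i htg
    induction htg with
    | single h => exact step 0 _ h h0
    | tail hT hE ih => exact step _ _ hE ih
  intro i
  by_cases hi : i = 0
  · rw [hi]; exact h0
  · exact main i (hirr 0 i (Ne.symm hi))

/-- real coefficients -/
def aR (q : ℕ → ℕ → ℝ) (lam : ℝ) (i j : ℕ) : ℝ :=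
  if j = 0 ∨ j = i then 0 else ((-q i i) / (-q i i - lam)) * (q i j / (-q i i))

/-- real iterates -/
def itR (q : ℕ → ℕ → ℝ) (lam : ℝ) (N : ℕ) : ℕ → Fin (N+1) → ℝ
  | 0 => fun _ => 0
  | n+1 => fun i => (∑ j : Fin (N+1), aR q lam (i:ℕ) (j:ℕ) * itR q lam N n j)
      + 1/(-q (i:ℕ) (i:ℕ) - lam)

lemma aR_nonneg (hq : IsQMatrix q) (hQ : 0 < ⨅ i, -q i i) {lam : ℝ} (hlam : lam < ⨅ i, -q i i)
    (i j : ℕ) : 0 ≤ aR q lam i j := by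
  unfold aR
  split_ifs with h
  · exact le_rfl
  · push_neg at h
    have h1 : 0 < -q i i := hq.diag_neg i
    have h2 : 0 < -q i i - lam := by have := qpos hq hQ i; linarith
    have h3 : 0 ≤ q i j := hq.offdiag_nonneg i j (Ne.symm h.2)
    positivity

lemma itR_nonneg (hq : IsQMatrix q) (hQ : 0 < ⨅ i, -q i i) {lam : ℝ} (hlam0 : 0 < lam)
    (hlam : lam < ⨅ i, -q i i) (N n : ℕ) (i : Fin (N+1)) : 0 ≤ itR q lam N n i := by
  induction n generalizing i with
  | zero => exact le_rfl
  | succ m ih =>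
    have h2 : 0 < -q (i:ℕ) (i:ℕ) - lam := by have := qpos hq hQ (i:ℕ); linarith
    refine add_nonneg (Finset.sum_nonneg fun j _ =>
      mul_nonneg (aR_nonneg hq hQ hlam _ _) (ih j)) (by positivity)

lemma AN_eq_ofReal_aR (hq : IsQMatrix q) (hQ : 0 < ⨅ i, -q i i) {lam : ℝ}
    (hlam : lam < ⨅ i, -q i i) {N : ℕ} (i j : Fin (N+1)) :
    AN q lam N i j = ENNReal.ofReal (aR q lam (i:ℕ) (j:ℕ)) := by
  have h1 : 0 < -q (i:ℕ) (i:ℕ) := hq.diag_neg _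
  have h2 : 0 < -q (i:ℕ) (i:ℕ) - lam := by have := qpos hq hQ (i:ℕ); linarith
  unfold AN aR embed
  by_cases h0 : (j:ℕ) = 0
  · rw [if_pos h0, if_pos (Or.inl h0), ENNReal.ofReal_zero]
  by_cases hji : (j:ℕ) = (i:ℕ)
  · rw [if_neg h0, if_pos hji, if_pos (Or.inr hji), mul_zero, ENNReal.ofReal_zero]
  · rw [if_neg h0, if_neg hji, if_neg (by push_neg; exact ⟨h0, hji⟩),
      ← ENNReal.ofReal_mul (by positivity)]

lemma solIter_eq_itR (hq : IsQMatrix q) (hQ : 0 < ⨅ i, -q i i) {lam : ℝ} (hlam0 : 0 < lam)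
    (hlam : lam < ⨅ i, -q i i) (N n : ℕ) (i : Fin (N+1)) :
    MinSolAux.solIter (AN q lam N) (gN q lam N) n i = ENNReal.ofReal (itR q lam N n i) := by
  induction n generalizing i with
  | zero => simp [MinSolAux.solIter, itR]
  | succ m ih =>
    have h2 : 0 < -q (i:ℕ) (i:ℕ) - lam := by have := qpos hq hQ (i:ℕ); linarith
    show (∑' j, AN q lam N i j * MinSolAux.solIter (AN q lam N) (gN q lam N) m j)
        + gN q lam N i = _
    rw [tsum_fintype]
    have hterm : ∀ j : Fin (N+1), AN q lam N i j *
        MinSolAux.solIter (AN q lam N) (gN q lam N) m j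
        = ENNReal.ofReal (aR q lam (i:ℕ) (j:ℕ) * itR q lam N m j) := by
      intro j
      rw [ih j, AN_eq_ofReal_aR hq hQ hlam,
        ENNReal.ofReal_mul (aR_nonneg hq hQ hlam _ _)]
    rw [Finset.sum_congr rfl fun j _ => hterm j,
      ← ENNReal.ofReal_sum_of_nonneg fun j _ =>
        mul_nonneg (aR_nonneg hq hQ hlam _ _) (itR_nonneg hq hQ hlam0 hlam N m j)]
    show _ + ENNReal.ofReal (1/(-q (i:ℕ) (i:ℕ) - lam)) = _
    rw [← ENNReal.ofReal_add (Finset.sum_nonneg fun j _ =>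
      mul_nonneg (aR_nonneg hq hQ hlam _ _) (itR_nonneg hq hQ hlam0 hlam N m j)) (by positivity)]
    simp only [itR]

lemma itR_continuousAt (hq : IsQMatrix q) {N : ℕ} {a : ℝ}
    (hden : ∀ k : Fin (N+1), -q (k:ℕ) (k:ℕ) - a ≠ 0) (n : ℕ) (i : Fin (N+1)) :
    ContinuousAt (fun lam => itR q lam N n i) a := by
  induction n generalizing i with
  | zero => exact continuousAt_const
  | succ m ih =>
    refine ContinuousAt.add ?_ ?_
    · refine tendsto_finset_sum _ fun j _ => ?_
      refine ContinuousAt.mul ?_ (ih j)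
      unfold aR
      split_ifs with h
      · exact continuousAt_const
      · refine ContinuousAt.mul ?_ continuousAt_const
        exact ContinuousAt.div continuousAt_const
          ((continuous_const.sub continuous_id).continuousAt) (hden i)
    · exact ContinuousAt.div continuousAt_const
        ((continuous_const.sub continuous_id).continuousAt) (hden i)

end QAux


/-- Properties of the truncated exponential-moment systems. -/
theorem exp_truncation_lemma (q : ℕ → ℕ → ℝ)
    (hq : IsQMatrix q) (hirr : MatIrreducible q) (hreg : QRegular q)
    (hqinf : 0 < ⨅ i, -q i i)
    (hrec : RecurrentAt (embed q) 0)
    (ES : ℕ → ℝ≥0∞)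
    (hES : IsMinSol (fun i j => if j = 0 then 0 else embed q i j)
      (fun i => (ENNReal.ofReal (-q i i))⁻¹) ES)
    (hESfin : ∀ i, ES i ≠ ⊤)
    (x : ℝ → (N : ℕ) → (Fin (N + 1) → ℝ≥0∞))
    (hx : ∀ lam ∈ Set.Ioo (0 : ℝ) (⨅ i, -q i i), ∀ N : ℕ, 1 ≤ N →
      IsMinSol
        (fun i j : Fin (N + 1) => if (j : ℕ) = 0 then 0 else
          ENNReal.ofReal ((-q (i : ℕ) (i : ℕ)) / (-q (i : ℕ) (i : ℕ) - lam)) *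
            embed q (i : ℕ) (j : ℕ))
        (fun i : Fin (N + 1) => ENNReal.ofReal (1 / (-q (i : ℕ) (i : ℕ) - lam)))
        (x lam N)) :
    ((¬ ∃ lam ∈ Set.Ioo (0 : ℝ) (⨅ i, -q i i), ∃ e : ℕ → ℝ≥0∞,
        IsMinSol
          (fun i j => if j = 0 then 0 else
            ENNReal.ofReal ((-q i i) / (-q i i - lam)) * embed q i j)
          (fun i => ENNReal.ofReal (1 / (-q i i - lam))) e ∧ ∀ i, e i ≠ ⊤) →
      (∀ N₁ N₂ : ℕ, 1 ≤ N₁ → N₁ ≤ N₂ →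
          x ((⨅ i, -q i i) / 2) N₁ 0 ≤ x ((⨅ i, -q i i) / 2) N₂ 0) ∧
        Tendsto (fun N : ℕ => x ((⨅ i, -q i i) / 2) N 0) atTop (𝓝 ⊤)) ∧
    (∀ lt ∈ Set.Ioo (0 : ℝ) (⨅ i, -q i i), ∀ N : ℕ, 1 ≤ N →
      x lt N 0 ≠ ⊤ → ∃ lh ∈ Set.Ioo lt (⨅ i, -q i i), x lh N 0 ≠ ⊤) ∧
    (∀ N : ℕ, 1 ≤ N →
      ContinuousOn (fun lam : ℝ => x lam N 0) (Set.Ioc 0 ((⨅ i, -q i i) / 2))) ∧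
    (∀ N : ℕ, 1 ≤ N → ∃ L : ℝ≥0∞,
      Tendsto (fun lam : ℝ => x lam N 0) (𝓝[>] (0 : ℝ)) (𝓝 L) ∧ L ≤ ES 0 ∧ ES 0 ≠ ⊤) := by
  classical
  have hQ : 0 < ⨅ i, -q i i := hqinf
  have hhalf : (⨅ i, -q i i) / 2 ∈ Set.Ioo (0 : ℝ) (⨅ i, -q i i) := ⟨by linarith, by linarith⟩
  refine ⟨?_, ?_, ?_, ?_⟩
  · -- part 1
    intro hNE
    have hmono : ∀ N₁ N₂ : ℕ, 1 ≤ N₁ → N₁ ≤ N₂ →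
        x ((⨅ i, -q i i) / 2) N₁ 0 ≤ x ((⨅ i, -q i i) / 2) N₂ 0 := by
      intro N₁ N₂ h1 h12
      have h := QAux.minsol_mono_N (q := q) h12
        (hx _ hhalf N₁ h1) (hx _ hhalf N₂ (h1.trans h12)) 0
      have hz : Fin.castLE (by omega : N₁ + 1 ≤ N₂ + 1) (0 : Fin (N₁+1)) = 0 := by
        ext; simp
      rwa [hz] at h
    refine ⟨hmono, ?_⟩
    have hxN : ∀ N, 1 ≤ N → IsMinSol (QAux.AN q ((⨅ i, -q i i) / 2) N)
        (QAux.gN q ((⨅ i, -q i i) / 2) N) (x ((⨅ i, -q i i) / 2) N) :=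
      fun N hN => hx _ hhalf N hN
    have hsol := QAux.full_sol hq hQ hhalf (fun N => x ((⨅ i, -q i i) / 2) N) hxN
    have he0 : (⨆ N, QAux.xE q (fun N => x ((⨅ i, -q i i) / 2) N) N 0) = ⊤ := by
      by_contra h
      obtain ⟨m, hm⟩ := MinSolAux.exists_isMinSol (QAux.Afull q ((⨅ i, -q i i) / 2))
        (QAux.gfull q ((⨅ i, -q i i) / 2))
      have hm0 : m 0 ≠ ⊤ := by
        intro ht
        exact h (top_le_iff.mp (ht ▸ hm.2 _ hsol 0))
      have hfin := QAux.finprop hq hQ hhalf hirr hm.1 hm0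
      exact hNE ⟨(⨅ i, -q i i) / 2, hhalf, m, hm, hfin⟩
    apply ENNReal.tendsto_nhds_top
    intro n
    have hlt : (n : ℝ≥0∞) < ⨆ N, QAux.xE q (fun N => x ((⨅ i, -q i i) / 2) N) N 0 := by
      rw [he0]; exact ENNReal.natCast_lt_top n
    obtain ⟨N₀, hN₀⟩ := lt_iSup_iff.mp hlt
    have hcond : 0 ≤ N₀ ∧ 1 ≤ N₀ := by
      by_contra hc
      rw [QAux.xE, dif_neg hc] at hN₀
      exact absurd hN₀ (by simp)
    filter_upwards [eventually_ge_atTop N₀] with N hN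
    have hx0 : QAux.xE q (fun N => x ((⨅ i, -q i i) / 2) N) N₀ 0
        = x ((⨅ i, -q i i) / 2) N₀ 0 := by
      rw [QAux.xE, dif_pos hcond]
      congr 1
    calc (n : ℝ≥0∞) < x ((⨅ i, -q i i) / 2) N₀ 0 := hx0 ▸ hN₀
      _ ≤ x ((⨅ i, -q i i) / 2) N 0 := hmono N₀ N hcond.2 hN
  · -- part 2
    intro lt hlt N hN hfin
    obtain ⟨ε, hε, hsup⟩ := QAux.supbound hq hQ hlt one_lt_two (hx lt hlt N hN)
    obtain ⟨hlhQ, hbound⟩ := hsup (lt + ε/2) (by linarith) (by linarith)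
    refine ⟨lt + ε/2, ⟨by linarith, hlhQ⟩, ?_⟩
    have hle := hbound _ (hx _ ⟨by have := hlt.1; linarith, hlhQ⟩ N hN) 0
    exact ne_top_of_le_ne_top (ENNReal.mul_ne_top ENNReal.ofReal_ne_top hfin) hle
  · -- part 3
    intro N hN a ha
    have haQ : a ∈ Set.Ioo (0:ℝ) (⨅ i, -q i i) := ⟨ha.1, by have := ha.2; linarith⟩
    have hden : ∀ k : Fin (N+1), -q (k:ℕ) (k:ℕ) - a ≠ 0 := fun k => by
      have h1 := QAux.qpos hq hQ (k:ℕ)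
      have h2 := haQ.2
      intro h; linarith [h]
    have hxa : IsMinSol (QAux.AN q a N) (QAux.gN q a N) (x a N) := hx a haQ N hN
    refine tendsto_order.2 ⟨?_, ?_⟩
    · intro b hb
      replace hb : b < x a N 0 := hb
      rw [MinSolAux.IsMinSol.eq_iSup_solIter hxa 0] at hb
      obtain ⟨n, hn⟩ := lt_iSup_iff.mp hb
      rw [QAux.solIter_eq_itR hq hQ haQ.1 haQ.2 N n 0] at hn
      have hcont : ContinuousAt (fun lam => ENNReal.ofReal (QAux.itR q lam N n 0)) a :=
        ENNReal.continuous_ofReal.continuousAt.comp (QAux.itR_continuousAt hq hden n 0)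
      filter_upwards [nhdsWithin_le_nhds (hcont.preimage_mem_nhds (Ioi_mem_nhds hn)),
        self_mem_nhdsWithin] with lam h1 h2
      have hlamQ : lam ∈ Set.Ioo (0:ℝ) (⨅ i, -q i i) := ⟨h2.1, by have := h2.2; linarith⟩
      have hxlam : IsMinSol (QAux.AN q lam N) (QAux.gN q lam N) (x lam N) :=
        hx lam hlamQ N hN
      calc b < ENNReal.ofReal (QAux.itR q lam N n 0) := h1
        _ = MinSolAux.solIter (QAux.AN q lam N) (QAux.gN q lam N) n 0 :=
            (QAux.solIter_eq_itR hq hQ hlamQ.1 hlamQ.2 N n 0).symm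
        _ ≤ x lam N 0 := MinSolAux.solIter_le_sol _ _ _
            (fun i => le_of_eq (hxlam.1 i).symm) n 0
    · intro b hb
      replace hb : x a N 0 < b := hb
      have htend : Tendsto (fun θ : ℝ => ENNReal.ofReal θ * x a N 0) (𝓝[>] (1:ℝ))
          (𝓝 (x a N 0)) := by
        have h1 : Tendsto (fun θ : ℝ => ENNReal.ofReal θ) (𝓝[>] (1:ℝ)) (𝓝 1) := by
          have h2 : Tendsto ENNReal.ofReal (𝓝 (1:ℝ)) (𝓝 (ENNReal.ofReal 1)) :=
            ENNReal.continuous_ofReal.continuousAt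
          rw [ENNReal.ofReal_one] at h2
          exact h2.mono_left nhdsWithin_le_nhds
        simpa using ENNReal.Tendsto.mul_const h1 (Or.inl one_ne_zero)
      obtain ⟨θ, hθb, hθ1⟩ := ((htend.eventually_lt_const hb).and self_mem_nhdsWithin).exists
      obtain ⟨ε, hε, hsup⟩ := QAux.supbound hq hQ haQ hθ1 hxa
      filter_upwards [nhdsWithin_le_nhds (Ioo_mem_nhds (by linarith : a - 1 < a)
        (by linarith : a < a + ε)), self_mem_nhdsWithin] with lam h1 h2
      rcases le_or_gt lam a with hle | hgt
      · have hlamQ : lam ∈ Set.Ioo (0:ℝ) (⨅ i, -q i i) := ⟨h2.1, by linarith [haQ.2]⟩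
        exact lt_of_le_of_lt (QAux.minsol_mono_lam hq hQ h2.1 hle haQ.2
          (hx lam hlamQ N hN) hxa 0) hb
      · obtain ⟨hlQ, hbd⟩ := hsup lam hgt h1.2
        exact lt_of_le_of_lt (hbd _ (hx lam ⟨h2.1, hlQ⟩ N hN) 0) hθb
  · -- part 4
    intro N hN
    haveI hne : Nonempty (Set.Ioo (0:ℝ) (⨅ i, -q i i)) := ⟨⟨(⨅ i, -q i i)/2, hhalf⟩⟩
    refine ⟨⨅ l : Set.Ioo (0:ℝ) (⨅ i, -q i i), x l.1 N 0, ?_, ?_, hESfin 0⟩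
    · refine tendsto_order.2 ⟨?_, ?_⟩
      · intro b hb
        filter_upwards [Ioo_mem_nhdsGT_of_mem (left_mem_Ico.mpr hQ)] with lam hlam
        exact lt_of_lt_of_le hb (iInf_le (fun l : Set.Ioo (0:ℝ) (⨅ i, -q i i) => x l.1 N 0) ⟨lam, hlam⟩)
      · intro b hb
        obtain ⟨⟨l₀, hl₀⟩, hxl₀⟩ := iInf_lt_iff.mp hb
        filter_upwards [Ioo_mem_nhdsGT_of_mem (left_mem_Ico.mpr hl₀.1)] with lam hlam
        have hlamQ : lam ∈ Set.Ioo (0:ℝ) (⨅ i, -q i i) := ⟨hlam.1, hlam.2.trans hl₀.2⟩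
        exact lt_of_le_of_lt (QAux.minsol_mono_lam hq hQ hlam.1 hlam.2.le hl₀.2
          (hx lam hlamQ N hN) (hx l₀ hl₀ N hN) 0) hxl₀
    · -- L ≤ ES 0
      have key : ∀ θ : ℝ, 1 < θ →
          (⨅ l : Set.Ioo (0:ℝ) (⨅ i, -q i i), x l.1 N 0) ≤ ENNReal.ofReal θ * ES 0 := by
        intro θ hθ
        have hθ0 : (0:ℝ) < θ := by linarith
        have hM0 : 0 ≤ ∑ j : Fin (N+1), (ES (j:ℕ)).toReal :=
          Finset.sum_nonneg fun _ _ => ENNReal.toReal_nonneg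
        have hlam0 : 0 < min ((θ-1)/(θ * ((∑ j : Fin (N+1), (ES (j:ℕ)).toReal) + 1)))
            ((⨅ i, -q i i)/2) :=
          lt_min (div_pos (by linarith) (mul_pos hθ0 (by linarith))) (by linarith)
        have hlamQ : min ((θ-1)/(θ * ((∑ j : Fin (N+1), (ES (j:ℕ)).toReal) + 1)))
            ((⨅ i, -q i i)/2) < ⨅ i, -q i i :=
          lt_of_le_of_lt (min_le_right _ _) (by linarith)
        have hy := hx _ ⟨hlam0, hlamQ⟩ N hN
        have h := QAux.minsol_le_ES hq hQ ES hES hESfin hθ hlam0 hlamQ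
          (min_le_left _ _) hy 0
        rw [Fin.val_zero] at h
        exact le_trans (iInf_le _ ⟨_, hlam0, hlamQ⟩) h
      have htend : Tendsto (fun θ : ℝ => ENNReal.ofReal θ * ES 0) (𝓝[>] (1:ℝ))
          (𝓝 (ES 0)) := by
        have h1 : Tendsto (fun θ : ℝ => ENNReal.ofReal θ) (𝓝[>] (1:ℝ)) (𝓝 1) := by
          have h2 : Tendsto ENNReal.ofReal (𝓝 (1:ℝ)) (𝓝 (ENNReal.ofReal 1)) :=
            ENNReal.continuous_ofReal.continuousAt
          rw [ENNReal.ofReal_one] at h2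
          exact h2.mono_left nhdsWithin_le_nhds
        simpa using ENNReal.Tendsto.mul_const h1 (Or.inl one_ne_zero)
      refine ge_of_tendsto htend ?_
      filter_upwards [self_mem_nhdsWithin] with θ hθ
      exact key θ hθ
end
end
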